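/- arXiv:2504.16827 — 6 statements merged into one kernel-verified Lean document; each statement's English description precedes it below -/
import Mathlib

section
/- Let n ≥ 3 and let V be a nonnegative potential on ℝ^n, not a.e. zero, in the reverse Hölder class RH_q for some q ≥ n/2, with critical radius function ρ. If f : ℝ^n → ℝ is locally integrable with ‖f‖_{BMO_L} < ∞, then Mf(x) < +∞ for almost every x ∈ ℝ^n. -/
open MeasureTheory Metric ENNReal Filter
open Topology

noncomputable section

/-- Euclidean space `ℝ^n`. -/
abbrev En (n : ℕ) := EuclideanSpace ℝ (Fin n)

/-- Mean oscillation of `f` over a set `s` (average of `|f - f_s|`). -/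
def oscAvg {n : ℕ} (f : En n → ℝ) (s : Set (En n)) : ℝ :=
  ⨍ y in s, |f y - ⨍ z in s, f z|

/-- The `BMO_L` norm associated to the critical radius function `ρ`:
the supremum of mean oscillations over subcritical balls plus the supremum
of averages of `|f|` over supercritical balls. -/
def bmoLNorm {n : ℕ} (ρ : En n → ℝ) (f : En n → ℝ) : ℝ≥0∞ :=
  (⨆ (x : En n) (r : ℝ) (_ : 0 < r) (_ : r < ρ x),
      ENNReal.ofReal (oscAvg f (ball x r))) +
  (⨆ (x : En n) (r : ℝ) (_ : ρ x ≤ r),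
      ENNReal.ofReal (⨍ y in ball x r, |f y|))

/-- The uncentered Hardy–Littlewood maximal function (`ℝ≥0∞`-valued). -/
def maxBall {n : ℕ} (f : En n → ℝ) (x : En n) : ℝ≥0∞ :=
  ⨆ (c : En n) (r : ℝ) (_ : 0 < r) (_ : x ∈ ball c r),
    ENNReal.ofReal (⨍ y in ball c r, |f y|)

namespace BMOaux

lemma en_nontrivial (n : ℕ) (hn : 0 < n) : Nontrivial (En n) :=
  Module.nontrivial_of_finrank_pos (R := ℝ) (by rw [finrank_euclideanSpace_fin]; exact hn)

lemma volB (n : ℕ) (hn : 0 < n) (c : En n) {r : ℝ} (hr : 0 ≤ r) :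
    (volume (ball c r)).toReal = r ^ n * (volume (ball (0 : En n) 1)).toReal := by
  haveI := en_nontrivial n hn
  rw [Measure.addHaar_ball volume c hr, finrank_euclideanSpace_fin, ENNReal.toReal_mul,
    ENNReal.toReal_ofReal (by positivity)]

lemma volCB (n : ℕ) (c : En n) {r : ℝ} (hr : 0 ≤ r) :
    (volume (closedBall c r)).toReal = r ^ n * (volume (ball (0 : En n) 1)).toReal := by
  rw [Measure.addHaar_closedBall volume c hr, finrank_euclideanSpace_fin, ENNReal.toReal_mul,
    ENNReal.toReal_ofReal (by positivity)]

lemma omega_pos (n : ℕ) : 0 < (volume (ball (0 : En n) 1)).toReal :=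
  ENNReal.toReal_pos (measure_ball_pos volume _ one_pos).ne' measure_ball_lt_top.ne

lemma volB_pos (n : ℕ) (c : En n) {r : ℝ} (hr : 0 < r) : 0 < (volume (ball c r)).toReal :=
  ENNReal.toReal_pos (measure_ball_pos volume _ hr).ne' measure_ball_lt_top.ne

/-- average over a ball is at most `(R/r)^n` times the average over a larger ball. -/
lemma avg_ball_le (n : ℕ) (hn : 0 < n) (g : En n → ℝ) (hg : ∀ y, 0 ≤ g y)
    {c d : En n} {r R : ℝ} (hr : 0 < r) (hR : 0 < R)
    (hsub : ball c r ⊆ ball d R) (hint : IntegrableOn g (ball d R) volume) :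
    ⨍ y in ball c r, g y ≤ (R / r) ^ n * ⨍ y in ball d R, g y := by
  rw [setAverage_eq, setAverage_eq, smul_eq_mul, smul_eq_mul]
  have h1 : ∫ y in ball c r, g y ≤ ∫ y in ball d R, g y :=
    setIntegral_mono_set hint (Filter.Eventually.of_forall fun y => hg y)
      (HasSubset.Subset.eventuallyLE hsub)
  have h2 : 0 ≤ ∫ y in ball d R, g y :=
    setIntegral_nonneg measurableSet_ball fun y _ => hg y
  have hv1 := volB n hn c hr.le
  have hv2 := volB n hn d hR.le
  have hω := omega_pos n
  rw [measureReal_def, measureReal_def, hv1, hv2]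
  rw [div_pow]
  have hrn : 0 < r ^ n := by positivity
  have hRn : 0 < R ^ n := by positivity
  calc (r ^ n * (volume (ball (0:En n) 1)).toReal)⁻¹ * ∫ y in ball c r, g y
      ≤ (r ^ n * (volume (ball (0:En n) 1)).toReal)⁻¹ * ∫ y in ball d R, g y := by
        apply mul_le_mul_of_nonneg_left h1 (by positivity)
    _ = R ^ n / r ^ n * ((R ^ n * (volume (ball (0:En n) 1)).toReal)⁻¹ *
          ∫ y in ball d R, g y) := by
        field_simp
    _ ≤ _ := le_rfl

/-- average over a ball is at most `(R/r)^n` times the average over a larger closed ball. -/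
lemma avg_ball_le_closed (n : ℕ) (hn : 0 < n) (g : En n → ℝ) (hg : ∀ y, 0 ≤ g y)
    {c d : En n} {r R : ℝ} (hr : 0 < r) (hR : 0 ≤ R)
    (hsub : ball c r ⊆ closedBall d R) (hint : IntegrableOn g (closedBall d R) volume) :
    ⨍ y in ball c r, g y ≤ (R / r) ^ n * ⨍ y in closedBall d R, g y := by
  rw [setAverage_eq, setAverage_eq, smul_eq_mul, smul_eq_mul]
  have h1 : ∫ y in ball c r, g y ≤ ∫ y in closedBall d R, g y :=
    setIntegral_mono_set hint (Filter.Eventually.of_forall fun y => hg y)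
      (HasSubset.Subset.eventuallyLE hsub)
  have h2 : 0 ≤ ∫ y in closedBall d R, g y :=
    setIntegral_nonneg measurableSet_closedBall fun y _ => hg y
  have hv1 := volB n hn c hr.le
  have hv2 := volCB n d hR
  have hω := omega_pos n
  rw [measureReal_def, measureReal_def, hv1, hv2, div_pow]
  have hrn : 0 < r ^ n := by positivity
  rcases eq_or_lt_of_le hR with hR0 | hRpos
  · exfalso
    have hvol : volume (ball c r) ≤ volume (closedBall d R) := measure_mono hsub
    have hz : volume (closedBall d R) = 0 := by
      haveI := en_nontrivial n hn
      rw [Measure.addHaar_closedBall volume d hR, finrank_euclideanSpace_fin, ← hR0]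
      simp [zero_pow hn.ne']
    exact (measure_ball_pos volume c hr).ne' (le_antisymm (hz ▸ hvol) zero_le)
  · have hRn : 0 < R ^ n := by positivity
    calc (r ^ n * (volume (ball (0:En n) 1)).toReal)⁻¹ * ∫ y in ball c r, g y
        ≤ (r ^ n * (volume (ball (0:En n) 1)).toReal)⁻¹ * ∫ y in closedBall d R, g y := by
          apply mul_le_mul_of_nonneg_left h1 (by positivity)
      _ = R ^ n / r ^ n * ((R ^ n * (volume (ball (0:En n) 1)).toReal)⁻¹ *
            ∫ y in closedBall d R, g y) := by
          field_simp
      _ ≤ _ := le_rfl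


/-- `V` is integrable on balls, given that `V^q` is. -/
lemma V_integrableOn (n : ℕ) (V : En n → ℝ) (hV0 : ∀ x, 0 ≤ V x) {q : ℝ} (hq1 : 1 < q)
    {s : Set (En n)} (hs : MeasurableSet s) (hfin : volume s < ⊤)
    (hVq : IntegrableOn (fun y => V y ^ q) s volume) :
    IntegrableOn V s volume := by
  have hqpos : (0:ℝ) < q := lt_trans one_pos hq1
  have hmeas : AEStronglyMeasurable V (volume.restrict s) := by
    have h1 : AEStronglyMeasurable (fun y => (V y ^ q) ^ (1/q)) (volume.restrict s) :=
      (Real.continuous_rpow_const (by positivity)).comp_aestronglyMeasurable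
        hVq.aestronglyMeasurable
    have h2 : (fun y => (V y ^ q) ^ (1/q)) = V := by
      funext y
      rw [← Real.rpow_mul (hV0 y), mul_one_div_cancel hqpos.ne', Real.rpow_one]
    rwa [h2] at h1
  refine Integrable.mono' (((integrableOn_const hfin.ne : IntegrableOn (fun _ => (1:ℝ)) s volume)).add hVq) hmeas
    (Filter.Eventually.of_forall fun y => ?_)
  rw [Real.norm_eq_abs, abs_of_nonneg (hV0 y)]
  rcases le_or_gt (V y) 1 with h | h
  · have : (0:ℝ) ≤ V y ^ q := Real.rpow_nonneg (hV0 y) q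
    simp only [Pi.add_apply]
    linarith
  · have : V y ≤ V y ^ q := by
      calc V y = V y ^ (1:ℝ) := (Real.rpow_one _).symm
        _ ≤ V y ^ q := Real.rpow_le_rpow_of_exponent_le h.le hq1.le
    simp only [Pi.add_apply]
    linarith

/-- Hölder's inequality for a nonnegative function on a set of finite measure. -/
lemma holder0 (n : ℕ) (V : En n → ℝ) (hV0 : ∀ x, 0 ≤ V x) {q : ℝ} (hq1 : 1 < q)
    {E : Set (En n)} (hE : MeasurableSet E) (hfin : volume E < ⊤)
    (hVq : IntegrableOn (fun y => V y ^ q) E volume) :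
    ∫ y in E, V y ≤ (∫ y in E, V y ^ q) ^ (1/q) * (volume E).toReal ^ (1 - 1/q) := by
  have hVi : IntegrableOn V E volume := V_integrableOn n V hV0 hq1 hE hfin hVq
  set μ' := volume.restrict E with hμ'
  have hconj : q.HolderConjugate q.conjExponent := Real.HolderConjugate.conjExponent hq1
  have hfm : AEMeasurable (fun y => ENNReal.ofReal (V y)) μ' :=
    ENNReal.measurable_ofReal.comp_aemeasurable hVi.aestronglyMeasurable.aemeasurable
  have hgm : AEMeasurable (fun _ : En n => (1:ℝ≥0∞)) μ' := aemeasurable_const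
  have H := ENNReal.lintegral_mul_le_Lp_mul_Lq μ' hconj hfm hgm
  have hL : ENNReal.ofReal (∫ y in E, V y) = ∫⁻ y, ENNReal.ofReal (V y) ∂μ' :=
    ofReal_integral_eq_lintegral_ofReal hVi (Filter.Eventually.of_forall fun y => hV0 y)
  have hLq : ENNReal.ofReal (∫ y in E, V y ^ q) = ∫⁻ y, ENNReal.ofReal (V y) ^ q ∂μ' := by
    rw [ofReal_integral_eq_lintegral_ofReal hVq
      (Filter.Eventually.of_forall fun y => Real.rpow_nonneg (hV0 y) q)]
    congr 1
    funext y
    rw [ENNReal.ofReal_rpow_of_nonneg (hV0 y) (by positivity)]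
  simp only [Pi.mul_apply, mul_one] at H
  have h2 : ∫⁻ _, (1:ℝ≥0∞) ^ q.conjExponent ∂μ' = volume E := by
    simp [hμ', Measure.restrict_apply, MeasurableSet.univ]
  rw [← hLq, h2, ← hL] at H
  -- now H : ofReal (∫ V) ≤ (ofReal (∫ V^q))^(1/q) * (volume E)^(1/q.conjExponent)
  have hfin2 : (ENNReal.ofReal (∫ y in E, V y ^ q)) ^ (1/q) *
      (volume E) ^ (1/q.conjExponent) ≠ ⊤ := by
    apply ENNReal.mul_ne_top
    · exact ENNReal.rpow_ne_top_of_nonneg (by positivity) ENNReal.ofReal_ne_top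
    · exact ENNReal.rpow_ne_top_of_nonneg hconj.symm.one_div_nonneg hfin.ne
  have he : 1/q.conjExponent = 1 - 1/q := by
    have h3 := hconj.inv_add_inv_eq_one
    rw [one_div, one_div]
    linarith
  rw [he] at H hfin2
  have := (ENNReal.ofReal_le_iff_le_toReal hfin2).mp H
  refine this.trans (le_of_eq ?_)
  rw [ENNReal.toReal_mul, ← ENNReal.toReal_rpow, ← ENNReal.toReal_rpow,
    ENNReal.toReal_ofReal (setIntegral_nonneg hE fun y _ => Real.rpow_nonneg (hV0 y) q)]


/-- Consequence of the reverse Hölder inequality on a ball. -/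
lemma rh_ball (n : ℕ) (V : En n → ℝ) (hV0 : ∀ x, 0 ≤ V x) {q C_V : ℝ} (hq1 : 1 < q)
    (hCV : 0 < C_V) {x : En n} {t : ℝ} (ht : 0 < t) (hn : 0 < n)
    (hRH1 : (⨍ y in ball x t, V y ^ q) ^ (1/q) ≤ C_V * ⨍ y in ball x t, V y) :
    ∫ y in ball x t, V y ^ q ≤
      ((volume (ball x t)).toReal) ^ (1-q) * (C_V * ∫ y in ball x t, V y) ^ q := by
  set v := (volume (ball x t)).toReal with hvdef
  have hv : 0 < v := volB_pos n x ht
  set a := ∫ y in ball x t, V y ^ q with hadef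
  set b := ∫ y in ball x t, V y with hbdef
  have ha : 0 ≤ a := setIntegral_nonneg measurableSet_ball fun y _ => Real.rpow_nonneg (hV0 y) q
  have hb : 0 ≤ b := setIntegral_nonneg measurableSet_ball fun y _ => hV0 y
  rw [setAverage_eq, setAverage_eq, smul_eq_mul, smul_eq_mul, measureReal_def, ← hvdef, ← hadef, ← hbdef] at hRH1
  have h1 : ((v⁻¹*a)^(1/q))^q ≤ (C_V*(v⁻¹*b))^q :=
    Real.rpow_le_rpow (Real.rpow_nonneg (by positivity) _) hRH1 (by positivity)
  rw [← Real.rpow_mul (by positivity : (0:ℝ) ≤ v⁻¹*a)] at h1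
  rw [one_div_mul_cancel (by positivity : q ≠ 0), Real.rpow_one] at h1
  -- h1 : v⁻¹ * a ≤ (C_V * (v⁻¹ * b)) ^ q
  have h2 : (C_V*(v⁻¹*b))^q = (v^q)⁻¹ * (C_V*b)^q := by
    rw [show C_V*(v⁻¹*b) = v⁻¹*(C_V*b) by ring,
      Real.mul_rpow (by positivity) (by positivity), Real.inv_rpow hv.le]
  have h3 : a ≤ v * ((v^q)⁻¹ * (C_V*b)^q) := by
    have := mul_le_mul_of_nonneg_left h1 hv.le
    rw [h2] at this
    calc a = v * (v⁻¹ * a) := by field_simp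
      _ ≤ v * ((v^q)⁻¹ * (C_V*b)^q) := this
  refine h3.trans (le_of_eq ?_)
  rw [Real.rpow_sub hv, Real.rpow_one]
  field_simp


/-- The annuli-counting contradiction in the critical case `q = n/2`. -/
lemma annuli_contradiction (n : ℕ) (hn0 : 0 < n) (hnR : 3 ≤ (n:ℝ)) (V : En n → ℝ)
    (hV0 : ∀ y, 0 ≤ V y) {q CC C₂ ρx : ℝ} (hq1 : 1 < q) (hqeq : (n:ℝ)/2 = q)
    (hC₂ : 0 < C₂) (hρx : 0 < ρx) (x : En n)
    (hVloc : ∀ r : ℝ, 0 < r → IntegrableOn (fun y => V y ^ q) (ball x r) volume)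
    (hlow : ∀ T : ℝ, ρx < T → T ^ ((n:ℝ)-2) < ∫ y in ball x T, V y)
    (hup : ∀ T : ℝ, 0 < T → ∫ y in ball x T, V y ≤ C₂ * T^((n:ℝ)-2))
    (hAq : ∀ M : ℝ, ∃ t : ℝ, M < t ∧ ∫ y in ball x t, V y ^ q ≤ CC) : False := by
  set ω := (volume (ball (0 : En n) 1)).toReal with hωdef
  have hω : 0 < ω := omega_pos n
  have hqpos : (0:ℝ) < q := lt_trans one_pos hq1
  have h1q : (0:ℝ) ≤ 1 - 1/q := by
    have : 1/q < 1 := by rw [div_lt_one hqpos]; linarith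
    linarith
  have hVint : ∀ r : ℝ, 0 < r → IntegrableOn V (ball x r) volume := fun r hr =>
    V_integrableOn n V hV0 hq1 measurableSet_ball measure_ball_lt_top (hVloc r hr)
  obtain ⟨m₀, hm₀⟩ := pow_unbounded_of_one_lt (R := ℝ) (2*C₂) one_lt_two
  set b := (2:ℝ)^(m₀+1) with hbdef
  have hb2 : (2:ℝ) ≤ b := by
    rw [hbdef]
    calc (2:ℝ) = 2^1 := (pow_one 2).symm
      _ ≤ 2^(m₀+1) := pow_le_pow_right₀ one_le_two (by omega)
  have hbC : 2*C₂ ≤ b := by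
    rw [hbdef]
    calc 2*C₂ ≤ 2^m₀ := hm₀.le
      _ ≤ 2^(m₀+1) := pow_le_pow_right₀ one_le_two (by omega)
  have hb1 : (1:ℝ) ≤ b := by linarith
  have hbn2 : 2*C₂ ≤ b^((n:ℝ)-2) := by
    calc 2*C₂ ≤ b := hbC
      _ = b^(1:ℝ) := (Real.rpow_one b).symm
      _ ≤ b^((n:ℝ)-2) := Real.rpow_le_rpow_of_exponent_le hb1 (by linarith)
  set R : ℕ → ℝ := fun i => max ρx 1 * b^i with hRdef
  have hRpos : ∀ i, 0 < R i := by
    intro i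
    exact _root_.mul_pos (lt_of_lt_of_le one_pos (le_max_right _ _)) (pow_pos (by linarith) i)
  have hRstep : ∀ i, R (i+1) = R i * b := by
    intro i
    simp only [hRdef, pow_succ]
    ring
  have hRρ : ∀ i : ℕ, ρx < R (i+1) := by
    intro i
    have h1 : max ρx 1 ≤ R i := by
      have hpow : (1:ℝ) ≤ b^i := by
        calc (1:ℝ) = b^0 := (pow_zero b).symm
          _ ≤ b^i := pow_le_pow_right₀ hb1 (Nat.zero_le i)
      calc max ρx 1 = max ρx 1 * 1 := (mul_one _).symm
        _ ≤ max ρx 1 * b^i :=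
            mul_le_mul_of_nonneg_left hpow (le_trans one_pos.le (le_max_right _ _))
    have h2 : R i * 2 ≤ R (i+1) := by
      rw [hRstep i]
      exact mul_le_mul_of_nonneg_left hb2 (hRpos i).le
    have h3 : ρx ≤ max ρx 1 := le_max_left _ _
    nlinarith [hRpos i]
  set Ψ : ℕ → ℝ := fun i => ∫ y in ball x (R i), V y ^ q with hΨdef
  set δ := (1/2:ℝ)^q * ω^(1-q) with hδdef
  have hδpos : 0 < δ :=
    _root_.mul_pos (Real.rpow_pos_of_pos (by norm_num) _) (Real.rpow_pos_of_pos hω _)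
  have hstep : ∀ i : ℕ, δ ≤ Ψ (i+1) - Ψ i := by
    intro i
    have hRi := hRpos i
    have hRi1 := hRpos (i+1)
    have hRlt : R i < R (i+1) := by
      rw [hRstep i]
      nlinarith
    set E := ball x (R (i+1)) \ ball x (R i) with hEdef
    have hEm : MeasurableSet E := measurableSet_ball.diff measurableSet_ball
    have hEfin : volume E < ⊤ := lt_of_le_of_lt (measure_mono Set.diff_subset) measure_ball_lt_top
    have hVqE : IntegrableOn (fun y => V y ^ q) E volume :=
      (hVloc (R (i+1)) hRi1).mono_set Set.diff_subset
    have hμE : ∫ y in E, V y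
        = (∫ y in ball x (R (i+1)), V y) - ∫ y in ball x (R i), V y :=
      integral_diff measurableSet_ball (hVint (R (i+1)) hRi1) (ball_subset_ball hRlt.le)
    have hΨE : ∫ y in E, V y ^ q = Ψ (i+1) - Ψ i :=
      integral_diff measurableSet_ball (hVloc (R (i+1)) hRi1) (ball_subset_ball hRlt.le)
    have hlow1 : R (i+1) ^ ((n:ℝ)-2) < ∫ y in ball x (R (i+1)), V y := hlow _ (hRρ i)
    have hup1 : ∫ y in ball x (R i), V y ≤ C₂ * R i ^ ((n:ℝ)-2) := hup _ hRi
    have hdouble : C₂ * R i ^ ((n:ℝ)-2) ≤ (1/2) * R (i+1) ^ ((n:ℝ)-2) := by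
      rw [hRstep i, Real.mul_rpow hRi.le (by linarith : (0:ℝ) ≤ b)]
      have h2 : 0 < R i ^ ((n:ℝ)-2) := Real.rpow_pos_of_pos hRi _
      nlinarith [hbn2]
    have hmass : (1/2) * R (i+1) ^ ((n:ℝ)-2) ≤ ∫ y in E, V y := by
      rw [hμE]
      linarith
    have hh := holder0 n V hV0 hq1 hEm hEfin hVqE
    set P := ∫ y in E, V y ^ q with hPdef
    have hPnn : 0 ≤ P := setIntegral_nonneg hEm fun y _ => Real.rpow_nonneg (hV0 y) q
    have hvolE : (volume E).toReal ≤ R (i+1) ^ ((n:ℝ)) * ω := by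
      have h6 : (volume E).toReal ≤ (volume (ball x (R (i+1)))).toReal :=
        ENNReal.toReal_mono measure_ball_lt_top.ne (measure_mono Set.diff_subset)
      rw [volB n hn0 x hRi1.le] at h6
      rw [← Real.rpow_natCast (R (i+1)) n] at h6
      exact h6
    set c := (R (i+1) ^ ((n:ℝ)) * ω) ^ (1-1/q) with hcdef
    have hcpos : 0 < c := Real.rpow_pos_of_pos (by positivity) _
    have hkey : (1/2) * R (i+1) ^ ((n:ℝ)-2) ≤ P^(1/q) * c := by
      refine hmass.trans (hh.trans ?_)
      exact mul_le_mul_of_nonneg_left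
        (Real.rpow_le_rpow ENNReal.toReal_nonneg hvolE h1q)
        (Real.rpow_nonneg hPnn _)
    have h5 : ((1/2) * R (i+1)^((n:ℝ)-2)) / c ≤ P^(1/q) := (div_le_iff₀ hcpos).mpr hkey
    have h6 : (((1/2) * R (i+1)^((n:ℝ)-2)) / c)^q ≤ P := by
      have h7 := Real.rpow_le_rpow (by positivity) h5 hqpos.le
      rwa [← Real.rpow_mul hPnn, one_div_mul_cancel hqpos.ne', Real.rpow_one] at h7
    have hXq : (((1/2) * R (i+1)^((n:ℝ)-2)) / c)^q = δ := by
      have hRq := hRi1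
      rw [hcdef, Real.div_rpow (by positivity) (Real.rpow_nonneg (by positivity) _)]
      rw [Real.mul_rpow (by norm_num : (0:ℝ) ≤ 1/2) (Real.rpow_nonneg hRq.le _)]
      rw [← Real.rpow_mul hRq.le]
      rw [← Real.rpow_mul (by positivity : (0:ℝ) ≤ R (i+1) ^ ((n:ℝ)) * ω)]
      have he : (1-1/q)*q = q - 1 := by field_simp
      rw [he]
      rw [Real.mul_rpow (Real.rpow_nonneg hRq.le _) hω.le, ← Real.rpow_mul hRq.le]
      rw [show ((n:ℝ)-2)*q = (n:ℝ)*(q-1) by rw [← hqeq]; ring]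
      rw [hδdef, show (1:ℝ)-q = -(q-1) by ring, Real.rpow_neg hω.le]
      have hX : (0:ℝ) < R (i+1) ^ ((n:ℝ)*(q-1)) := Real.rpow_pos_of_pos hRq _
      have hW : (0:ℝ) < ω ^ (q-1) := Real.rpow_pos_of_pos hω _
      field_simp
    rw [hXq] at h6
    have h8 : P = Ψ (i+1) - Ψ i := hΨE
    linarith [h6, h8]
  have htel : ∀ N : ℕ, (N:ℝ) * δ ≤ Ψ N := by
    intro N
    induction N with
    | zero =>
      have h0 : (0:ℝ) ≤ Ψ 0 :=
        setIntegral_nonneg measurableSet_ball fun y _ => Real.rpow_nonneg (hV0 y) q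
      simpa using h0
    | succ N ih =>
      have h1 := hstep N
      push_cast
      linarith
  obtain ⟨N, hN⟩ := exists_nat_gt (CC/δ)
  have hNδ : CC < N * δ := by
    rw [div_lt_iff₀ hδpos] at hN
    linarith
  obtain ⟨t, hRt, htCC⟩ := hAq (R N)
  have ht0 : (0:ℝ) < t := lt_trans (hRpos N) hRt
  have hend : Ψ N ≤ CC := by
    refine le_trans ?_ htCC
    exact setIntegral_mono_set (hVloc t ht0)
      (Filter.Eventually.of_forall fun y => Real.rpow_nonneg (hV0 y) q)
      (HasSubset.Subset.eventuallyLE (ball_subset_ball hRt.le))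
  linarith [htel N]

end BMOaux

set_option maxHeartbeats 2000000 in
/-- for `f` of bounded mean oscillation associated to `L`, the
uncentered Hardy–Littlewood maximal function is finite almost everywhere. -/
theorem maximal_ae_finite_of_BMOL
    (n : ℕ) (hn : 3 ≤ n)
    (V : En n → ℝ) (hV0 : ∀ x, 0 ≤ V x)
    (hVne : ¬ (∀ᵐ x : En n ∂volume, V x = 0))
    (q : ℝ) (hq : (n : ℝ) / 2 ≤ q)
    (hVloc : ∀ (x : En n) (r : ℝ), 0 < r →
      IntegrableOn (fun y => V y ^ q) (ball x r) volume)
    (C_V : ℝ) (hCV : 0 < C_V)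
    (hRH : ∀ (x : En n) (r : ℝ), 0 < r →
      (⨍ y in ball x r, V y ^ q) ^ (1 / q) ≤ C_V * ⨍ y in ball x r, V y)
    (ρ : En n → ℝ)
    (hρ : ∀ x, ρ x = sSup {r : ℝ | 0 < r ∧ r ^ (2 - (n : ℝ)) * ∫ y in ball x r, V y ≤ 1})
    (hρbdd : ∀ x, BddAbove {r : ℝ | 0 < r ∧ r ^ (2 - (n : ℝ)) * ∫ y in ball x r, V y ≤ 1})
    (hρpos : ∀ x, 0 < ρ x)
    (f : En n → ℝ) (hfloc : LocallyIntegrable f volume)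
    (hfb : bmoLNorm ρ f < ⊤) :
    ∀ᵐ x : En n ∂volume, maxBall f x < ⊤ := by
  classical
  have hn0 : 0 < n := by omega
  have hnR : (3:ℝ) ≤ (n:ℝ) := by exact_mod_cast hn
  have hq1 : 1 < q := lt_of_lt_of_le (by linarith) hq
  have hqpos : (0:ℝ) < q := by linarith
  set ω := (volume (ball (0 : En n) 1)).toReal with hωdef
  have hω : 0 < ω := BMOaux.omega_pos n
  obtain ⟨N₂, hN₂0, hsup⟩ : ∃ N₂ : ℝ, 0 ≤ N₂ ∧ ∀ (c : En n) (r : ℝ), ρ c ≤ r →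
      ⨍ y in ball c r, |f y| ≤ N₂ := by
    rw [bmoLNorm] at hfb
    set S₂ := ⨆ (z : En n) (r : ℝ) (_ : ρ z ≤ r),
        ENNReal.ofReal (⨍ y in ball z r, |f y|) with hS₂def
    have hS₂ : S₂ < ⊤ := lt_of_le_of_lt le_add_self hfb
    refine ⟨S₂.toReal, ENNReal.toReal_nonneg, fun c r hcr => ?_⟩
    have hle : ENNReal.ofReal (⨍ y in ball c r, |f y|) ≤ S₂ := by
      rw [hS₂def]
      exact le_iSup_of_le c (le_iSup_of_le r (le_iSup_of_le hcr le_rfl))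
    exact (ENNReal.ofReal_le_iff_le_toReal hS₂.ne).mp hle
  have hfint : ∀ (c : En n) (R : ℝ), IntegrableOn (fun y => |f y|) (closedBall c R) volume :=
    fun c R => (hfloc.integrableOn_isCompact (isCompact_closedBall c R)).abs
  have hfintb : ∀ (c : En n) (R : ℝ), IntegrableOn (fun y => |f y|) (ball c R) volume :=
    fun c R => (hfint c R).mono_set ball_subset_closedBall
  have hVint : ∀ (c : En n) (r : ℝ), 0 < r → IntegrableOn V (ball c r) volume := fun c r hr =>
    BMOaux.V_integrableOn n V hV0 hq1 measurableSet_ball measure_ball_lt_top (hVloc c r hr)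
  have hPhiLow : ∀ (z : En n) (T : ℝ), ρ z < T →
      T ^ ((n:ℝ)-2) < ∫ y in ball z T, V y := by
    intro z T hT
    have hT0 : 0 < T := lt_trans (hρpos z) hT
    have hnotin : T ∉ {r : ℝ | 0 < r ∧ r ^ (2-(n:ℝ)) * ∫ y in ball z r, V y ≤ 1} := by
      intro hmem
      have h := le_csSup (hρbdd z) hmem
      rw [← hρ z] at h
      linarith
    have h2 : ¬ (T ^ (2-(n:ℝ)) * ∫ y in ball z T, V y ≤ 1) := fun h => hnotin ⟨hT0, h⟩
    push_neg at h2
    have h3 : T ^ (2-(n:ℝ)) = (T ^ ((n:ℝ)-2))⁻¹ := by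
      rw [show (2-(n:ℝ)) = -((n:ℝ)-2) by ring, Real.rpow_neg hT0.le]
    rw [h3] at h2
    have h4 : 0 < T ^ ((n:ℝ)-2) := Real.rpow_pos_of_pos hT0 _
    calc T ^ ((n:ℝ)-2) = T ^ ((n:ℝ)-2) * 1 := (mul_one _).symm
      _ < T ^ ((n:ℝ)-2) * ((T ^ ((n:ℝ)-2))⁻¹ * ∫ y in ball z T, V y) :=
          mul_lt_mul_of_pos_left h2 h4
      _ = ∫ y in ball z T, V y := by field_simp
  have hstepA : ∀ (z : En n) (t : ℝ), 0 < t →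
      (∫ y in ball z t, V y) ≤ ((4/3)*t)^((n:ℝ)-2) →
      ∫ y in ball z t, V y ^ q ≤
        (ω^(1-q) * (C_V * (4/3:ℝ)^((n:ℝ)-2))^q) * t ^ ((n:ℝ)-2*q) := by
    intro z t ht hΦ
    have hb0 : 0 ≤ ∫ y in ball z t, V y :=
      setIntegral_nonneg measurableSet_ball fun y _ => hV0 y
    have h1 := BMOaux.rh_ball n V hV0 hq1 hCV ht hn0 (hRH z t ht)
    rw [BMOaux.volB n hn0 z ht.le, ← hωdef] at h1
    refine h1.trans ?_
    have hM : (C_V * ∫ y in ball z t, V y)^q ≤ (C_V * ((4/3)*t)^((n:ℝ)-2))^q :=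
      Real.rpow_le_rpow (by positivity) (mul_le_mul_of_nonneg_left hΦ hCV.le) hqpos.le
    have step1 : (t^n*ω)^(1-q) * (C_V * ∫ y in ball z t, V y)^q ≤
        (t^n*ω)^(1-q) * (C_V * ((4/3)*t)^((n:ℝ)-2))^q := by
      apply mul_le_mul_of_nonneg_left hM (Real.rpow_nonneg (by positivity) _)
    refine step1.trans (le_of_eq ?_)
    -- pure rpow algebra
    have e1 : ((t:ℝ)^n*ω)^(1-q) = t ^ ((n:ℝ)*(1-q)) * ω^(1-q) := by
      rw [Real.mul_rpow (by positivity) hω.le, ← Real.rpow_natCast t n,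
        ← Real.rpow_mul ht.le]
    have e2 : (C_V * ((4/3:ℝ)*t)^((n:ℝ)-2))^q
        = (C_V * (4/3:ℝ)^((n:ℝ)-2))^q * t ^ (((n:ℝ)-2)*q) := by
      rw [Real.mul_rpow (by norm_num) ht.le, show C_V * ((4/3:ℝ)^((n:ℝ)-2) * t^((n:ℝ)-2))
          = (C_V * (4/3:ℝ)^((n:ℝ)-2)) * t^((n:ℝ)-2) by ring,
        Real.mul_rpow (by positivity) (Real.rpow_nonneg ht.le _),
        ← Real.rpow_mul ht.le]
    rw [e1, e2]
    have e3 : t ^ ((n:ℝ)*(1-q)) * t ^ (((n:ℝ)-2)*q) = t ^ ((n:ℝ)-2*q) := by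
      rw [← Real.rpow_add ht]
      ring_nf
    calc t ^ ((n:ℝ)*(1-q)) * ω^(1-q) * ((C_V * (4/3:ℝ)^((n:ℝ)-2))^q * t ^ (((n:ℝ)-2)*q))
        = ω^(1-q) * (C_V * (4/3:ℝ)^((n:ℝ)-2))^q *
            (t ^ ((n:ℝ)*(1-q)) * t ^ (((n:ℝ)-2)*q)) := by ring
      _ = ω^(1-q) * (C_V * (4/3:ℝ)^((n:ℝ)-2))^q * t ^ ((n:ℝ)-2*q) := by rw [e3]
  have hD : ∀ x : En n, ∃ T₀ : ℝ, 1 ≤ T₀ ∧ ∀ t : ℝ, 3 < t →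
      (∫ y in ball x t, V y) ≤ ((4/3)*t)^((n:ℝ)-2) → t ≤ T₀ := by
    intro x
    by_cases hbdd : ∃ b : ℝ, ∀ t : ℝ, 3 < t →
        (∫ y in ball x t, V y) ≤ ((4/3)*t)^((n:ℝ)-2) → t ≤ b
    · obtain ⟨b, hb⟩ := hbdd
      exact ⟨max b 1, le_max_right _ _, fun t h1 h2 => le_trans (hb t h1 h2) (le_max_left _ _)⟩
    exfalso
    push_neg at hbdd
    set CC := ω^(1-q) * (C_V * (4/3:ℝ)^((n:ℝ)-2))^q with hCCdef
    have hKpos : (0:ℝ) < (4/3:ℝ)^((n:ℝ)-2) := Real.rpow_pos_of_pos (by norm_num) _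
    have hCCpos : 0 < CC := by
      apply mul_pos (Real.rpow_pos_of_pos hω _) (Real.rpow_pos_of_pos (by positivity) _)
    have hA2 : ∀ t : ℝ, 3 < t → (∫ y in ball x t, V y) ≤ ((4/3)*t)^((n:ℝ)-2) →
        ∫ y in ball x t, V y ^ q ≤ CC * t ^ ((n:ℝ)-2*q) :=
      fun t h1 h2 => hstepA x t (by linarith) h2
    rcases lt_or_eq_of_le hq with hqgt | hqeq
    · -- q > n/2 : V vanishes a.e., contradiction with hVne
      apply hVne
      have hball : ∀ m : ℕ, ∀ᵐ y ∂volume, y ∈ ball x ((m:ℝ)+1) → V y = 0 := by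
        intro m
        have hm1 : (0:ℝ) < (m:ℝ)+1 := by positivity
        have hzero : ∫ y in ball x ((m:ℝ)+1), V y ^ q = 0 := by
          have hnn : 0 ≤ ∫ y in ball x ((m:ℝ)+1), V y ^ q :=
            setIntegral_nonneg measurableSet_ball fun y _ => Real.rpow_nonneg (hV0 y) q
          have hle : ∀ ε : ℝ, 0 < ε → ∫ y in ball x ((m:ℝ)+1), V y ^ q ≤ ε := by
            intro ε hε
            obtain ⟨t, ht3, htΦ, htgt⟩ := hbdd (max ((m:ℝ)+1) ((CC/ε) ^ (1/(2*q-(n:ℝ)))))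
            have htm : (m:ℝ)+1 < t := lt_of_le_of_lt (le_max_left _ _) htgt
            have ht0 : (0:ℝ) < t := by linarith
            have h5 : ∫ y in ball x ((m:ℝ)+1), V y ^ q ≤ ∫ y in ball x t, V y ^ q :=
              setIntegral_mono_set (hVloc x t ht0)
                (Filter.Eventually.of_forall fun y => Real.rpow_nonneg (hV0 y) q)
                (HasSubset.Subset.eventuallyLE (ball_subset_ball htm.le))
            have h6 := hA2 t ht3 htΦ
            have hexp : (0:ℝ) < 2*q - (n:ℝ) := by linarith
            have h7 : (CC/ε) ^ (1/(2*q-(n:ℝ))) < t := lt_of_le_of_lt (le_max_right _ _) htgt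
            have hbase : (0:ℝ) ≤ CC/ε := by positivity
            have h8 : CC / ε ≤ t ^ (2*q-(n:ℝ)) := by
              calc CC/ε = ((CC/ε) ^ (1/(2*q-(n:ℝ)))) ^ (2*q-(n:ℝ)) := by
                    rw [← Real.rpow_mul hbase, one_div_mul_cancel hexp.ne', Real.rpow_one]
                _ ≤ t ^ (2*q-(n:ℝ)) :=
                    Real.rpow_le_rpow (Real.rpow_nonneg hbase _) h7.le hexp.le
            have h9 : t ^ ((n:ℝ)-2*q) = (t ^ (2*q-(n:ℝ)))⁻¹ := by
              rw [show (n:ℝ)-2*q = -(2*q-(n:ℝ)) by ring, Real.rpow_neg ht0.le]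
            have h10 : 0 < t ^ (2*q-(n:ℝ)) := Real.rpow_pos_of_pos ht0 _
            have h11 : CC * t ^ ((n:ℝ)-2*q) ≤ ε := by
              rw [h9]
              have h12 : CC ≤ ε * t^(2*q-(n:ℝ)) := by
                calc CC = (CC/ε) * ε := by field_simp
                  _ ≤ t^(2*q-(n:ℝ)) * ε := mul_le_mul_of_nonneg_right h8 hε.le
                  _ = ε * t^(2*q-(n:ℝ)) := mul_comm _ _
              calc CC * (t^(2*q-(n:ℝ)))⁻¹
                  ≤ (ε * t^(2*q-(n:ℝ))) * (t^(2*q-(n:ℝ)))⁻¹ :=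
                    mul_le_mul_of_nonneg_right h12 (by positivity)
                _ = ε := by field_simp
            exact h5.trans (h6.trans h11)
          by_contra hne
          have hpos : 0 < ∫ y in ball x ((m:ℝ)+1), V y ^ q := lt_of_le_of_ne hnn (Ne.symm hne)
          linarith [hle ((∫ y in ball x ((m:ℝ)+1), V y ^ q)/2) (by linarith)]
        have hae0 := (integral_eq_zero_iff_of_nonneg_ae
          (Filter.Eventually.of_forall fun y => Real.rpow_nonneg (hV0 y) q)
          (hVloc x ((m:ℝ)+1) hm1)).mp hzero
        have hae1 := (ae_restrict_iff' measurableSet_ball).mp hae0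
        filter_upwards [hae1] with y hy hmem
        exact (Real.rpow_eq_zero (hV0 y) hqpos.ne').mp (hy hmem)
      have hall := ae_all_iff.mpr hball
      filter_upwards [hall] with y hy
      obtain ⟨m, hm⟩ := exists_nat_gt (dist y x)
      exact hy m (mem_ball.mpr (by push_cast; linarith))
    · -- q = n/2 : annuli argument
      have hnq : (n:ℝ) - 2*q = 0 := by rw [← hqeq]; ring
      have hq2n : 1/q = 2/(n:ℝ) := by rw [← hqeq]; field_simp
      set C₂ := C_V * (4/3:ℝ)^((n:ℝ)-2) with hC₂def
      have hC₂pos : 0 < C₂ := by positivity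
      have hA3 : ∀ t : ℝ, 3 < t → (∫ y in ball x t, V y) ≤ ((4/3)*t)^((n:ℝ)-2) →
          ∫ y in ball x t, V y ^ q ≤ CC := by
        intro t h1 h2
        have := hA2 t h1 h2
        rwa [hnq, Real.rpow_zero, mul_one] at this
      -- upper bound for the mass of V on balls centred at x
      have hU : ∀ T : ℝ, 0 < T → ∫ y in ball x T, V y ≤ C₂ * T^((n:ℝ)-2) := by
        intro T hT
        obtain ⟨t, ht3, htΦ, htgt⟩ := hbdd (max T 3)
        have hTt : T < t := lt_of_le_of_lt (le_max_left _ _) htgt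
        have ht0 : (0:ℝ) < t := by linarith
        have hVq := hA3 t ht3 htΦ
        have hh := BMOaux.holder0 n V hV0 hq1 measurableSet_ball measure_ball_lt_top
          (hVloc x T hT)
        have hmono : ∫ y in ball x T, V y ^ q ≤ ∫ y in ball x t, V y ^ q :=
          setIntegral_mono_set (hVloc x t ht0)
            (Filter.Eventually.of_forall fun y => Real.rpow_nonneg (hV0 y) q)
            (HasSubset.Subset.eventuallyLE (ball_subset_ball hTt.le))
        have hnn : 0 ≤ ∫ y in ball x T, V y ^ q :=
          setIntegral_nonneg measurableSet_ball fun y _ => Real.rpow_nonneg (hV0 y) q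
        have h1q : (0:ℝ) ≤ 1 - 1/q := by
          have : 1/q < 1 := by rw [div_lt_one hqpos]; linarith
          linarith
        have step : ∫ y in ball x T, V y ≤ CC^(1/q) * ((volume (ball x T)).toReal)^(1-1/q) := by
          refine hh.trans ?_
          apply mul_le_mul_of_nonneg_right ?_ (Real.rpow_nonneg ENNReal.toReal_nonneg _)
          exact Real.rpow_le_rpow hnn (hmono.trans hVq) (by positivity)
        refine step.trans (le_of_eq ?_)
        rw [BMOaux.volB n hn0 x hT.le, ← hωdef]
        rw [hCCdef]
        rw [Real.mul_rpow (Real.rpow_nonneg hω.le _) (Real.rpow_nonneg hC₂pos.le _)]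
        rw [← Real.rpow_mul hω.le, ← Real.rpow_mul hC₂pos.le]
        rw [mul_one_div_cancel hqpos.ne', Real.rpow_one]
        rw [Real.mul_rpow (by positivity) hω.le]
        rw [← Real.rpow_natCast T n, ← Real.rpow_mul hT.le]
        have hωexp : (1-q)*(1/q) + (1-1/q) = 0 := by field_simp; ring
        have hTexp : (n:ℝ)*(1-1/q) = (n:ℝ)-2 := by
          have hn' : (n:ℝ) ≠ 0 := by linarith
          rw [hq2n]
          field_simp
        calc ω^((1-q)*(1/q)) * C₂ * (T ^ ((n:ℝ)*(1-1/q)) * ω^(1-1/q))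
            = C₂ * T ^ ((n:ℝ)*(1-1/q)) * (ω^((1-q)*(1/q)) * ω^(1-1/q)) := by ring
          _ = C₂ * T ^ ((n:ℝ)-2) := by
              rw [← Real.rpow_add hω, hωexp, Real.rpow_zero, mul_one, hTexp]
      have hAq : ∀ M : ℝ, ∃ t : ℝ, M < t ∧ ∫ y in ball x t, V y ^ q ≤ CC := by
        intro M
        obtain ⟨t, ht3, htΦ, htgt⟩ := hbdd (max M 3)
        exact ⟨t, lt_of_le_of_lt (le_max_left _ _) htgt, hA3 t ht3 htΦ⟩
      exact BMOaux.annuli_contradiction n hn0 hnR V hV0 hq1 hqeq hC₂pos (hρpos x) x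
        (fun r hr => hVloc x r hr) (fun T hT => hPhiLow x T hT) hU hAq
  have hW : ∀ (x c : En n) (r : ℝ), 1 < r → x ∈ ball c r → 4*r < ρ c →
      ∃ t : ℝ, 3 < t ∧ (∫ y in ball x t, V y) ≤ ((4/3)*t)^((n:ℝ)-2) ∧ ρ c ≤ 2*t := by
    intro x c r hr1 hxc h4r
    have hrpos : (0:ℝ) < r := lt_trans one_pos hr1
    have hSne : Set.Nonempty {s : ℝ | 0 < s ∧ s ^ (2-(n:ℝ)) * ∫ y in ball c s, V y ≤ 1} := by
      by_contra hemp
      rw [Set.not_nonempty_iff_eq_empty] at hemp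
      have h := hρ c
      rw [hemp, Real.sSup_empty] at h
      exact absurd h (ne_of_gt (hρpos c))
    obtain ⟨s, hsmem, hs⟩ := exists_lt_of_lt_csSup hSne
      (show max (4*r) (ρ c - 1) < sSup _ by
        rw [← hρ c]; exact max_lt h4r (by linarith))
    obtain ⟨hs0, hsle⟩ := hsmem
    have hs4r : 4*r < s := lt_of_le_of_lt (le_max_left _ _) hs
    have hsρ : ρ c - 1 < s := lt_of_le_of_lt (le_max_right _ _) hs
    have hsub : ball x (s - r) ⊆ ball c s := by
      intro y hy
      rw [mem_ball]
      have h5 : dist y x < s - r := mem_ball.mp hy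
      have h6 : dist x c < r := mem_ball.mp hxc
      calc dist y c ≤ dist y x + dist x c := dist_triangle _ _ _
        _ < s := by linarith
    have hΦcs : ∫ y in ball c s, V y ≤ s ^ ((n:ℝ)-2) := by
      have h3 : s ^ (2-(n:ℝ)) = (s ^ ((n:ℝ)-2))⁻¹ := by
        rw [show (2-(n:ℝ)) = -((n:ℝ)-2) by ring, Real.rpow_neg hs0.le]
      rw [h3] at hsle
      have h4 : 0 < s ^ ((n:ℝ)-2) := Real.rpow_pos_of_pos hs0 _
      have h5 := mul_le_mul_of_nonneg_left hsle h4.le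
      rw [mul_one] at h5
      calc ∫ y in ball c s, V y
          = s ^ ((n:ℝ)-2) * ((s ^ ((n:ℝ)-2))⁻¹ * ∫ y in ball c s, V y) := by field_simp
        _ ≤ s ^ ((n:ℝ)-2) := h5
    refine ⟨s - r, by linarith, ?_, by linarith⟩
    have hmono : ∫ y in ball x (s - r), V y ≤ ∫ y in ball c s, V y :=
      setIntegral_mono_set (hVint c s hs0)
        (Filter.Eventually.of_forall fun y => hV0 y) (HasSubset.Subset.eventuallyLE hsub)
    refine hmono.trans (hΦcs.trans ?_)
    exact Real.rpow_le_rpow hs0.le (by linarith) (by linarith)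
  have hleb : ∀ᵐ x : En n ∂volume, ∃ Ms : ℝ, ∀ t : ℝ, 0 < t → t ≤ 2 →
      ⨍ y in closedBall x t, |f y| ≤ Ms := by
    have hlocn : LocallyIntegrable (fun y => |f y|) volume := by
      rw [locallyIntegrable_iff]
      exact fun k hk => (hfloc.integrableOn_isCompact hk).abs
    have hae := IsUnifLocDoublingMeasure.ae_tendsto_average (μ := volume) hlocn 1
    filter_upwards [hae] with x hx
    have hev : ∀ᶠ j in (𝓝[>] (0:ℝ)), x ∈ closedBall x (1 * j) :=
      eventually_mem_nhdsWithin.mono fun j hj =>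
        mem_closedBall_self (by simpa using (le_of_lt hj))
    have htend : Tendsto (fun t : ℝ => ⨍ y in closedBall x t, |f y|) (𝓝[>] (0:ℝ))
        (𝓝 |f x|) := hx (fun _ : ℝ => x) id tendsto_id hev
    have hev2 := htend.eventually_lt_const (show |f x| < |f x| + 1 by linarith)
    rw [(nhdsGT_basis (0:ℝ)).eventually_iff] at hev2
    obtain ⟨ε, hε, hev3⟩ := hev2
    set ε' := min ε 2 with hε'def
    have hε' : 0 < ε' := lt_min hε two_pos
    have hcbfin : volume (closedBall x ε') ≠ ⊤ := measure_closedBall_lt_top.ne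
    have hcbpos : 0 < (volume (closedBall x ε')).toReal := by
      rw [BMOaux.volCB n x hε'.le]
      have := BMOaux.omega_pos n
      positivity
    refine ⟨max (|f x| + 1) ((volume (closedBall x ε')).toReal⁻¹ *
      ∫ y in closedBall x 2, |f y|), fun t ht ht2 => ?_⟩
    rcases lt_or_ge t ε' with hcase | hcase
    · exact le_trans (hev3 ⟨ht, lt_of_lt_of_le hcase (min_le_left _ _)⟩).le (le_max_left _ _)
    · refine le_trans ?_ (le_max_right _ _)
      rw [setAverage_eq, smul_eq_mul]
      have hint1 : ∫ y in closedBall x t, |f y| ≤ ∫ y in closedBall x 2, |f y| :=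
        setIntegral_mono_set (hfint x 2) (Filter.Eventually.of_forall fun y => abs_nonneg _)
          (HasSubset.Subset.eventuallyLE (closedBall_subset_closedBall ht2))
      have hint0 : 0 ≤ ∫ y in closedBall x t, |f y| :=
        setIntegral_nonneg measurableSet_closedBall fun y _ => abs_nonneg _
      have hvle : (volume (closedBall x t)).toReal⁻¹ ≤ (volume (closedBall x ε')).toReal⁻¹ := by
        apply inv_anti₀ hcbpos
        exact ENNReal.toReal_mono measure_closedBall_lt_top.ne
          (measure_mono (closedBall_subset_closedBall hcase))
      exact mul_le_mul hvle hint1 hint0 (by positivity)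
  filter_upwards [hleb] with x hx
  obtain ⟨Ms, hMs⟩ := hx
  obtain ⟨T₀, hT₀1, hT₀⟩ := hD x
  set A := max N₂ (max ((4:ℝ)^n * N₂) (max ((2*T₀)^n * N₂) ((2:ℝ)^n * Ms))) with hAdef
  have key : ∀ (c : En n) (r : ℝ), 0 < r → x ∈ ball c r →
      ⨍ y in ball c r, |f y| ≤ A := by
    intro c r hrpos hxcr
    have hρc : 0 < ρ c := hρpos c
    by_cases h1 : ρ c ≤ r
    · exact le_trans (hsup c r h1) (le_max_left _ _)
    push_neg at h1
    have havgρ : 0 ≤ ⨍ y in ball c (ρ c), |f y| := by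
      rw [setAverage_eq, smul_eq_mul]
      have h0 : (0:ℝ) ≤ ∫ y in ball c (ρ c), |f y| :=
        setIntegral_nonneg measurableSet_ball fun y _ => abs_nonneg (f y)
      positivity
    by_cases h2 : ρ c ≤ 4*r
    · have hb := BMOaux.avg_ball_le n hn0 (fun y => |f y|) (fun y => abs_nonneg _) hrpos hρc
        (ball_subset_ball h1.le) (hfintb c (ρ c))
      have hb2 : (ρ c / r)^n ≤ (4:ℝ)^n :=
        pow_le_pow_left₀ (by positivity) (by rw [div_le_iff₀ hrpos]; linarith) n
      calc ⨍ y in ball c r, |f y| ≤ (ρ c / r)^n * ⨍ y in ball c (ρ c), |f y| := hb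
        _ ≤ (4:ℝ)^n * N₂ :=
            mul_le_mul hb2 (hsup c (ρ c) le_rfl) havgρ (by positivity)
        _ ≤ A := le_trans (le_max_left _ _) (le_max_right _ _)
    push_neg at h2
    by_cases h3 : r ≤ 1
    · have hsub : ball c r ⊆ closedBall x (2*r) := by
        intro y hy
        rw [mem_closedBall]
        have h5 : dist y c < r := mem_ball.mp hy
        have h6 : dist x c < r := mem_ball.mp hxcr
        calc dist y x ≤ dist y c + dist c x := dist_triangle _ _ _
          _ ≤ 2*r := by rw [dist_comm c x]; linarith
      have hb := BMOaux.avg_ball_le_closed n hn0 (fun y => |f y|) (fun y => abs_nonneg _)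
        hrpos (by linarith) hsub (hfint x (2*r))
      have h2r : (2*r/r : ℝ)^n = 2^n := by
        congr 1
        field_simp
      have hcb : ⨍ y in closedBall x (2*r), |f y| ≤ Ms := hMs (2*r) (by linarith) (by linarith)
      have havgcb : 0 ≤ ⨍ y in closedBall x (2*r), |f y| := by
        rw [setAverage_eq, smul_eq_mul]
        have h0 : (0:ℝ) ≤ ∫ y in closedBall x (2*r), |f y| :=
          setIntegral_nonneg measurableSet_closedBall fun y _ => abs_nonneg (f y)
        positivity
      calc ⨍ y in ball c r, |f y| ≤ (2*r/r)^n * ⨍ y in closedBall x (2*r), |f y| := hb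
        _ = 2^n * ⨍ y in closedBall x (2*r), |f y| := by rw [h2r]
        _ ≤ 2^n * Ms := mul_le_mul_of_nonneg_left hcb (by positivity)
        _ ≤ A := le_trans (le_max_right _ _)
            (le_trans (le_max_right _ _) (le_max_right _ _))
    · push_neg at h3
      obtain ⟨t, ht3, htD, hρ2t⟩ := hW x c r h3 hxcr h2
      have htT : t ≤ T₀ := hT₀ t ht3 htD
      have hb := BMOaux.avg_ball_le n hn0 (fun y => |f y|) (fun y => abs_nonneg _) hrpos hρc
        (ball_subset_ball h1.le) (hfintb c (ρ c))
      have hb2 : (ρ c / r)^n ≤ (2*T₀)^n := by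
        apply pow_le_pow_left₀ (by positivity)
        calc ρ c / r ≤ ρ c / 1 := by
              apply div_le_div_of_nonneg_left hρc.le one_pos h3.le
          _ = ρ c := div_one _
          _ ≤ 2*t := hρ2t
          _ ≤ 2*T₀ := by linarith
      calc ⨍ y in ball c r, |f y| ≤ (ρ c / r)^n * ⨍ y in ball c (ρ c), |f y| := hb
        _ ≤ (2*T₀)^n * N₂ :=
            mul_le_mul hb2 (hsup c (ρ c) le_rfl) havgρ (by positivity)
        _ ≤ A := le_trans (le_max_left _ _)
            (le_trans (le_max_right _ _) (le_max_right _ _))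
  have hfinal : maxBall f x ≤ ENNReal.ofReal A := by
    rw [maxBall]
    refine iSup_le fun c => iSup_le fun r => iSup_le fun hr => iSup_le fun hxr => ?_
    exact ENNReal.ofReal_le_ofReal (key c r hr hxr)
  exact lt_of_le_of_lt hfinal ENNReal.ofReal_lt_top
end
end

section
/- Let n ≥ 3 and let V be a nonnegative potential on ℝ^n, not a.e. zero, in the reverse Hölder class RH_q for some q ≥ n/2, with critical radius function ρ. There is a constant C_n depending only on n such that for every locally integrable f : ℝ^n → ℝ with ‖f‖_{BMO_L} < ∞, every x ∈ ℝ^n and every r > 0, (1/|B(x,r)|)∫_{B(x,r)} |f(y)| dy ≤ C_n · max{ (ρ(x)/r)^n , 1 } · ‖f‖_{BMO_L}. -/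
open MeasureTheory Metric ENNReal Filter

noncomputable section

/-- averages of `|f|` over arbitrary balls are controlled by the
`BMO_L` norm times `max ((ρ(x)/r)^n, 1)`. -/
theorem ball_average_le_BMOL
    (n : ℕ) (hn : 3 ≤ n)
    (V : En n → ℝ) (hV0 : ∀ x, 0 ≤ V x)
    (hVne : ¬ (∀ᵐ x : En n ∂volume, V x = 0))
    (q : ℝ) (hq : (n : ℝ) / 2 ≤ q)
    (hVloc : ∀ (x : En n) (r : ℝ), 0 < r →
      IntegrableOn (fun y => V y ^ q) (ball x r) volume)
    (C_V : ℝ) (hCV : 0 < C_V)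
    (hRH : ∀ (x : En n) (r : ℝ), 0 < r →
      (⨍ y in ball x r, V y ^ q) ^ (1 / q) ≤ C_V * ⨍ y in ball x r, V y)
    (ρ : En n → ℝ)
    (hρ : ∀ x, ρ x = sSup {r : ℝ | 0 < r ∧ r ^ (2 - (n : ℝ)) * ∫ y in ball x r, V y ≤ 1})
    (hρbdd : ∀ x, BddAbove {r : ℝ | 0 < r ∧ r ^ (2 - (n : ℝ)) * ∫ y in ball x r, V y ≤ 1})
    (hρpos : ∀ x, 0 < ρ x) :
    ∃ C : ℝ, 0 < C ∧ ∀ f : En n → ℝ, LocallyIntegrable f volume →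
      bmoLNorm ρ f < ⊤ →
      ∀ (x : En n) (r : ℝ), 0 < r →
        ⨍ y in ball x r, |f y| ≤ C * max ((ρ x / r) ^ n) 1 * (bmoLNorm ρ f).toReal := by
  refine ⟨1, one_pos, fun f hf hfin x r hr => ?_⟩
  set M := (bmoLNorm ρ f).toReal with hM
  set S2 := ⨆ (x : En n) (r : ℝ) (_ : ρ x ≤ r),
      ENNReal.ofReal (⨍ y in ball x r, |f y|) with hS2
  have hS2le : S2 ≤ bmoLNorm ρ f := le_add_self
  have hS2ne : S2 ≠ ⊤ := (hS2le.trans_lt hfin).ne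
  have key : ∀ (c : En n) (s : ℝ), ρ c ≤ s → ⨍ y in ball c s, |f y| ≤ M := by
    intro c s hs
    have h1 : ENNReal.ofReal (⨍ y in ball c s, |f y|) ≤ S2 :=
      le_iSup_of_le c (le_iSup_of_le s (le_iSup_of_le hs le_rfl))
    have h2 := (ENNReal.ofReal_le_iff_le_toReal hS2ne).1 h1
    exact h2.trans (ENNReal.toReal_mono hfin.ne hS2le)
  have hM0 : 0 ≤ M := ENNReal.toReal_nonneg
  have hmax1 : (1 : ℝ) ≤ max ((ρ x / r) ^ n) 1 := le_max_right _ _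
  rcases le_or_gt (ρ x) r with h | h
  · calc ⨍ y in ball x r, |f y| ≤ M := key x r h
      _ ≤ 1 * max ((ρ x / r) ^ n) 1 * M := by
          rw [one_mul]; exact le_mul_of_one_le_left hM0 hmax1
  · -- r < ρ x
    have hρx : 0 < ρ x := hρpos x
    have hint : IntegrableOn (fun y => |f y|) (ball x (ρ x)) volume :=
      ((hf.integrableOn_isCompact (isCompact_closedBall x (ρ x))).mono_set
        ball_subset_closedBall).abs
    have hIle : ∫ y in ball x r, |f y| ≤ ∫ y in ball x (ρ x), |f y| :=
      setIntegral_mono_set hint (Eventually.of_forall fun y => abs_nonneg _)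
        (HasSubset.Subset.eventuallyLE (ball_subset_ball h.le))
    have hI0 : 0 ≤ ∫ y in ball x r, |f y| :=
      setIntegral_nonneg measurableSet_ball fun y _ => abs_nonneg _
    -- volumes
    set u := (volume (ball (0 : En n) 1)).toReal with hu
    have hufin : volume (ball (0 : En n) 1) ≠ ⊤ := measure_ball_lt_top.ne
    have hu0 : 0 < u := ENNReal.toReal_pos (measure_ball_pos volume _ one_pos).ne' hufin
    have hvol : ∀ s : ℝ, 0 < s → (volume (ball x s)).toReal = s ^ n * u := by
      intro s hs
      rw [Measure.addHaar_ball_of_pos volume x hs, ENNReal.toReal_mul,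
        ENNReal.toReal_ofReal (pow_nonneg hs.le _), finrank_euclideanSpace_fin]
    have hvr := hvol r hr
    have hvρ := hvol (ρ x) hρx
    have hvr0 : (0:ℝ) < r ^ n * u := mul_pos (pow_pos hr n) hu0
    have hvρ0 : (0:ℝ) < ρ x ^ n * u := mul_pos (pow_pos hρx n) hu0
    have ha : ⨍ y in ball x (ρ x), |f y| ≤ M := key x (ρ x) le_rfl
    have ha0 : 0 ≤ ⨍ y in ball x (ρ x), |f y| := by
      rw [setAverage_eq]
      exact smul_nonneg (inv_nonneg.2 ENNReal.toReal_nonneg)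
        (setIntegral_nonneg measurableSet_ball fun y _ => abs_nonneg _)
    have havgρ : ∫ y in ball x (ρ x), |f y|
        = (ρ x ^ n * u) * ⨍ y in ball x (ρ x), |f y| := by
      rw [setAverage_eq, measureReal_def, hvρ, smul_eq_mul, ← mul_assoc, mul_inv_cancel₀ hvρ0.ne', one_mul]
    calc ⨍ y in ball x r, |f y|
        = (r ^ n * u)⁻¹ * ∫ y in ball x r, |f y| := by
          rw [setAverage_eq, measureReal_def, hvr, smul_eq_mul]
      _ ≤ (r ^ n * u)⁻¹ * ∫ y in ball x (ρ x), |f y| := by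
          gcongr
      _ = (ρ x ^ n / r ^ n) * ⨍ y in ball x (ρ x), |f y| := by
          rw [havgρ]; field_simp
      _ = (ρ x / r) ^ n * ⨍ y in ball x (ρ x), |f y| := by rw [div_pow]
      _ ≤ max ((ρ x / r) ^ n) 1 * M := by
          have := le_max_left ((ρ x / r) ^ n) 1
          have hp0 : 0 ≤ (ρ x / r) ^ n := pow_nonneg (div_nonneg hρx.le hr.le) n
          exact mul_le_mul this ha ha0 (le_trans zero_le_one hmax1)
      _ = 1 * max ((ρ x / r) ^ n) 1 * M := by ring
end
end

section
/- Let f : ℝ^n → [0,∞) be locally integrable with finite cube-BMO norm ‖f‖_BMO. Let Q' ⊆ Q'' be axis-parallel cubes sharing a common vertex, with ℓ(Q'') = ℓ(Q') + h where h > 0 and m := ℓ(Q')/h is an integer with m ≥ 2. Then f_{Q'} − f_{Q''} ≤ C(n)·(log m / m)·‖f‖_BMO, where C(n) depends only on the dimension n. -/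
open MeasureTheory ENNReal Filter

noncomputable section

/-- The axis-parallel (half-open) cube with lower corner `a` and sidelength `l`. -/
def cube {n : ℕ} (a : Fin n → ℝ) (l : ℝ) : Set (Fin n → ℝ) :=
  {y | ∀ i, a i ≤ y i ∧ y i < a i + l}

/-- The cube-BMO norm: the supremum of mean oscillations over all axis-parallel cubes. -/
def cubeBmo {n : ℕ} (f : (Fin n → ℝ) → ℝ) : ℝ≥0∞ :=
  ⨆ (a : Fin n → ℝ) (l : ℝ) (_ : 0 < l),
    ENNReal.ofReal (⨍ y in cube a l, |f y - ⨍ z in cube a l, f z|)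

/-- The uncentered cube maximal function (`ℝ≥0∞`-valued). -/
def maxCube {n : ℕ} (f : (Fin n → ℝ) → ℝ) (x : Fin n → ℝ) : ℝ≥0∞ :=
  ⨆ (a : Fin n → ℝ) (l : ℝ) (_ : 0 < l) (_ : x ∈ cube a l),
    ENNReal.ofReal (⨍ y in cube a l, |f y|)

namespace AvgDiff



variable {n : ℕ}

lemma cube_eq_pi (a : Fin n → ℝ) (l : ℝ) :
    cube a l = Set.pi Set.univ (fun i => Set.Ico (a i) (a i + l)) := by
  ext y; simp [cube, Set.mem_pi]

lemma measurableSet_cube (a : Fin n → ℝ) (l : ℝ) : MeasurableSet (cube a l) := by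
  rw [cube_eq_pi]; exact MeasurableSet.univ_pi fun i => measurableSet_Ico

lemma volume_cube (a : Fin n → ℝ) {l : ℝ} (hl : 0 ≤ l) :
    volume (cube a l) = ENNReal.ofReal l ^ n := by
  rw [cube_eq_pi, volume_pi_pi]
  simp [Real.volume_Ico]

lemma volume_cube_toReal (a : Fin n → ℝ) {l : ℝ} (hl : 0 ≤ l) :
    (volume (cube a l)).toReal = l ^ n := by
  rw [volume_cube a hl]
  simp [ENNReal.toReal_pow, ENNReal.toReal_ofReal hl]

lemma cube_subset_cube {a1 a2 : Fin n → ℝ} {l1 l2 : ℝ}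
    (hc : ∀ i, a2 i ≤ a1 i ∧ a1 i + l1 ≤ a2 i + l2) : cube a1 l1 ⊆ cube a2 l2 := by
  intro x hx i
  exact ⟨le_trans (hc i).1 (hx i).1, lt_of_lt_of_le (hx i).2 (hc i).2⟩

lemma integrableOn_cube {f : (Fin n → ℝ) → ℝ} (hf : LocallyIntegrable f volume)
    (a : Fin n → ℝ) (l : ℝ) : IntegrableOn f (cube a l) := by
  have hc : IsCompact (Set.pi Set.univ (fun i : Fin n => Set.Icc (a i) (a i + l))) :=
    isCompact_univ_pi fun i => isCompact_Icc
  refine (hf.integrableOn_isCompact hc).mono_set ?_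
  intro x hx
  rw [Set.mem_univ_pi]
  exact fun i => ⟨(hx i).1, le_of_lt (hx i).2⟩

lemma avg_eq (f : (Fin n → ℝ) → ℝ) (a : Fin n → ℝ) {l : ℝ} (hl : 0 ≤ l) :
    (⨍ x in cube a l, f x) = (l ^ n)⁻¹ * ∫ x in cube a l, f x := by
  rw [setAverage_eq, measureReal_def, volume_cube_toReal a hl, smul_eq_mul]

lemma bmo_le {f : (Fin n → ℝ) → ℝ} (hb : cubeBmo f < ⊤)
    {a : Fin n → ℝ} {l : ℝ} (hl : 0 < l) :
    (⨍ y in cube a l, |f y - ⨍ z in cube a l, f z|) ≤ (cubeBmo f).toReal := by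
  have h1 : ENNReal.ofReal (⨍ y in cube a l, |f y - ⨍ z in cube a l, f z|) ≤ cubeBmo f := by
    refine le_trans ?_ (le_iSup _ a)
    refine le_trans ?_ (le_iSup _ l)
    exact le_iSup (fun _ : 0 < l => _) hl
  have h2 : 0 ≤ ⨍ y in cube a l, |f y - ⨍ z in cube a l, f z| := by
    rw [setAverage_eq, smul_eq_mul]
    have : 0 ≤ ∫ y in cube a l, |f y - ⨍ z in cube a l, f z| :=
      integral_nonneg fun y => abs_nonneg _
    positivity
  calc (⨍ y in cube a l, |f y - ⨍ z in cube a l, f z|)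
      = (ENNReal.ofReal (⨍ y in cube a l, |f y - ⨍ z in cube a l, f z|)).toReal := by
        rw [ENNReal.toReal_ofReal h2]
    _ ≤ (cubeBmo f).toReal := ENNReal.toReal_mono hb.ne h1

lemma volume_cube_ne_top (a : Fin n → ℝ) {l : ℝ} (hl : 0 ≤ l) :
    volume (cube a l) ≠ ⊤ := by
  rw [volume_cube a hl]
  exact (ENNReal.pow_lt_top ENNReal.ofReal_lt_top).ne

lemma avg_sub_avg_abs_le {f : (Fin n → ℝ) → ℝ} (hf : LocallyIntegrable f volume)
    (hb : cubeBmo f < ⊤) {a1 a2 : Fin n → ℝ} {l1 l2 : ℝ} (h1 : 0 < l1) (h2 : 0 < l2)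
    (hsub : cube a1 l1 ⊆ cube a2 l2) :
    |(⨍ x in cube a1 l1, f x) - ⨍ x in cube a2 l2, f x| ≤
      (l2 / l1) ^ n * (cubeBmo f).toReal := by
  set c := ⨍ z in cube a2 l2, f z with hc
  have hint1 : IntegrableOn f (cube a1 l1) := integrableOn_cube hf a1 l1
  have hg1 : IntegrableOn (fun x => f x - c) (cube a1 l1) :=
    hint1.sub (integrableOn_const
      (volume_cube_ne_top a1 h1.le))
  have hg2 : IntegrableOn (fun x => f x - c) (cube a2 l2) :=
    (integrableOn_cube hf a2 l2).sub (integrableOn_const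
      (volume_cube_ne_top a2 h2.le))
  have hl1n : (0:ℝ) < l1 ^ n := pow_pos h1 n
  have hl2n : (0:ℝ) < l2 ^ n := pow_pos h2 n
  -- step 1: the difference equals the average of f - c over Q1
  have e1 : (⨍ x in cube a1 l1, f x) - c = ⨍ x in cube a1 l1, (f x - c) := by
    rw [avg_eq f a1 h1.le, avg_eq (fun x => f x - c) a1 h1.le,
      integral_sub hint1 (integrableOn_const
        (volume_cube_ne_top a1 h1.le)),
      setIntegral_const, measureReal_def, volume_cube_toReal a1 h1.le, smul_eq_mul]
    field_simp
  rw [e1]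
  -- step 2: bound by average of abs
  have e2 : |⨍ x in cube a1 l1, (f x - c)| ≤ ⨍ x in cube a1 l1, |f x - c| := by
    rw [avg_eq (fun x => f x - c) a1 h1.le, avg_eq (fun x => |f x - c|) a1 h1.le,
      abs_mul, abs_of_nonneg (inv_nonneg.2 hl1n.le)]
    gcongr
    calc |∫ x in cube a1 l1, (f x - c)| ≤ ∫ x in cube a1 l1, |f x - c| := by
          simpa [Real.norm_eq_abs] using
            norm_integral_le_integral_norm (μ := volume.restrict (cube a1 l1))
              (fun x => f x - c)
      _ = ∫ x in cube a1 l1, |f x - c| := rfl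
  refine e2.trans ?_
  -- step 3: enlarge domain
  have e3 : (∫ x in cube a1 l1, |f x - c|) ≤ ∫ x in cube a2 l2, |f x - c| := by
    refine setIntegral_mono_set hg2.abs ?_ (HasSubset.Subset.eventuallyLE hsub)
    exact Filter.Eventually.of_forall fun x => abs_nonneg _
  have e4 : (⨍ x in cube a1 l1, |f x - c|) ≤ (l2 / l1) ^ n * ⨍ x in cube a2 l2, |f x - c| := by
    rw [avg_eq (fun x => |f x - c|) a1 h1.le, avg_eq (fun x => |f x - c|) a2 h2.le]
    rw [div_pow, div_mul_eq_mul_div, le_div_iff₀ hl1n]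
    calc (l1 ^ n)⁻¹ * (∫ x in cube a1 l1, |f x - c|) * l1 ^ n
        = ∫ x in cube a1 l1, |f x - c| := by field_simp
      _ ≤ ∫ x in cube a2 l2, |f x - c| := e3
      _ = l2 ^ n * ((l2 ^ n)⁻¹ * ∫ x in cube a2 l2, |f x - c|) := by field_simp
  refine e4.trans ?_
  have hbl := bmo_le hb (a := a2) h2
  have hr : (0:ℝ) ≤ (l2 / l1) ^ n := by positivity
  calc (l2 / l1) ^ n * ⨍ x in cube a2 l2, |f x - c|
      ≤ (l2 / l1) ^ n * (cubeBmo f).toReal := by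
        exact mul_le_mul_of_nonneg_left hbl hr

lemma chain_bound {f : (Fin n → ℝ) → ℝ} (hf : LocallyIntegrable f volume)
    (hb : cubeBmo f < ⊤) {b c : Fin n → ℝ} {h : ℝ} {m : ℕ} (hh : 0 < h) (hm : 1 ≤ m)
    (hbc : ∀ i, b i ≤ c i ∧ c i + h ≤ b i + ((m : ℝ) + 1) * h) :
    |(⨍ x in cube c h, f x) - ⨍ x in cube b (((m : ℝ) + 1) * h), f x| ≤
      2 ^ n * ((Nat.log 2 m : ℝ) + 1) * (cubeBmo f).toReal := by
  set L : ℝ := ((m : ℝ) + 1) * h with hL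
  have hLpos : 0 < L := by positivity
  have hhL : h ≤ L := by
    rw [hL]; have : (1:ℝ) ≤ (m:ℝ) := by exact_mod_cast hm
    nlinarith
  set t : ℕ → ℝ := fun j => min ((2 : ℝ) ^ j * h) L with ht
  set A : ℕ → (Fin n → ℝ) := fun j i => max (b i) (min (c i) (b i + L - t j)) with hA
  have htj : ∀ j, h ≤ t j ∧ t j ≤ L := by
    intro j
    refine ⟨le_min ?_ hhL, min_le_right _ _⟩
    nlinarith [one_le_pow₀ (by norm_num : (1:ℝ) ≤ 2) (n := j)]
  have htpos : ∀ j, 0 < t j := fun j => lt_of_lt_of_le hh (htj j).1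
  have htmono : ∀ j, t j ≤ t (j + 1) := by
    intro j
    refine min_le_min ?_ le_rfl
    have : (2:ℝ) ^ j ≤ 2 ^ (j+1) := by
      apply pow_le_pow_right₀ <;> norm_num
    nlinarith
  -- each S j contains R and is inside Q''; consecutive ones are nested
  have hAsub : ∀ j, cube (A j) (t j) ⊆ cube (A (j+1)) (t (j+1)) := by
    intro j
    apply cube_subset_cube
    intro i
    constructor
    · apply max_le_max le_rfl
      apply min_le_min le_rfl
      linarith [htmono j]
    · have expand : ∀ u : ℕ, A u i + t u = max (b i + t u) (min (c i + t u) (b i + L)) := by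
        intro u
        show b i ⊔ c i ⊓ (b i + L - t u) + t u = _
        rw [← max_add_add_right, ← min_add_add_right]
        congr 2
        ring
      rw [expand j, expand (j+1)]
      apply max_le_max (by linarith [htmono j])
      apply min_le_min (by linarith [htmono j]) le_rfl
  have hA0 : A 0 = c := by
    funext i
    rw [hA]
    have h0 : t 0 = h := by
      rw [ht]; simp only [pow_zero, one_mul]; exact min_eq_left hhL
    simp only [h0]
    rw [min_eq_left (by linarith [(hbc i).2]), max_eq_right (hbc i).1]
  have h2m : L ≤ (2:ℝ) ^ m * h := by
    have h1 : m + 1 ≤ 2 ^ m := Nat.lt_two_pow_self (n := m)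
    have : (m:ℝ) + 1 ≤ 2 ^ m := by exact_mod_cast h1
    rw [hL]
    nlinarith
  have htm : t m = L := by
    rw [ht]; exact min_eq_right h2m
  have hAm : A m = b := by
    funext i
    rw [hA]
    simp only [htm]
    rw [show b i + L - L = b i by ring, min_eq_right (hbc i).1, max_self]
  -- per-step bound
  have step : ∀ j, |(⨍ x in cube (A j) (t j), f x) - ⨍ x in cube (A (j+1)) (t (j+1)), f x| ≤
      (if (2:ℝ) ^ j * h < L then 2 ^ n * (cubeBmo f).toReal else 0) := by
    intro j
    by_cases hcase : (2:ℝ) ^ j * h < L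
    · rw [if_pos hcase]
      have htj2 : t j = 2 ^ j * h := min_eq_left hcase.le
      have hratio : t (j+1) / t j ≤ 2 := by
        rw [htj2, div_le_iff₀ (by positivity)]
        calc t (j+1) ≤ 2 ^ (j+1) * h := min_le_left _ _
          _ = 2 * (2 ^ j * h) := by ring
      refine (avg_sub_avg_abs_le hf hb (htpos j) (htpos (j+1)) (hAsub j)).trans ?_
      have hb0 : (0:ℝ) ≤ (cubeBmo f).toReal := ENNReal.toReal_nonneg
      have : (t (j+1) / t j) ^ n ≤ 2 ^ n := by
        apply pow_le_pow_left₀ (by positivity) hratio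
      nlinarith [pow_pos (htpos j) n]
    · rw [if_neg hcase]
      have h1 : t j = L := min_eq_right (le_of_not_gt hcase)
      have h2 : t (j+1) = L := min_eq_right (by
        have hps : (2:ℝ) ^ (j+1) = 2 * 2 ^ j := by rw [pow_succ]; ring
        have : (2:ℝ) ^ j * h ≤ 2 ^ (j+1) * h := by
          rw [hps]; nlinarith [pow_pos (by norm_num : (0:ℝ)<2) j]
        linarith [le_of_not_gt hcase])
      have : A j = A (j+1) := by funext i; rw [hA]; simp only [h1, h2]
      rw [this, h2, h1]
      simp
  -- telescoping
  have tele : |(⨍ x in cube (A 0) (t 0), f x) - ⨍ x in cube (A m) (t m), f x| ≤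
      ∑ j ∈ Finset.range m, (if (2:ℝ) ^ j * h < L then 2 ^ n * (cubeBmo f).toReal else 0) := by
    have := dist_le_range_sum_dist (fun j => ⨍ x in cube (A j) (t j), f x) m
    rw [Real.dist_eq] at this
    refine this.trans (Finset.sum_le_sum fun j _ => ?_)
    rw [Real.dist_eq]
    exact step j
  rw [hA0, hAm, htm] at tele
  have h0' : t 0 = h := by
    rw [ht]; simp only [pow_zero, one_mul]; exact min_eq_left hhL
  rw [h0'] at tele
  refine tele.trans ?_
  -- count nonzero terms
  have hb0 : (0:ℝ) ≤ 2 ^ n * (cubeBmo f).toReal := by positivity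
  calc ∑ j ∈ Finset.range m, (if (2:ℝ) ^ j * h < L then 2 ^ n * (cubeBmo f).toReal else 0)
      = ∑ j ∈ (Finset.range m).filter (fun j => (2:ℝ) ^ j * h < L),
          2 ^ n * (cubeBmo f).toReal := by
        rw [Finset.sum_filter]
    _ ≤ ((Nat.log 2 m : ℝ) + 1) * (2 ^ n * (cubeBmo f).toReal) := by
        rw [Finset.sum_const, nsmul_eq_mul]
        apply mul_le_mul_of_nonneg_right _ hb0
        have hsubf : (Finset.range m).filter (fun j => (2:ℝ) ^ j * h < L) ⊆
            Finset.range (Nat.log 2 m + 1) := by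
          intro j hj
          rw [Finset.mem_filter] at hj
          rw [Finset.mem_range, Nat.lt_succ_iff]
          have hj2 : (2:ℝ) ^ j * h < ((m:ℝ) + 1) * h := hj.2
          have : (2:ℝ) ^ j < (m:ℝ) + 1 := by nlinarith
          have hnat : 2 ^ j < m + 1 := by exact_mod_cast this
          have hle : 2 ^ j ≤ m := Nat.lt_succ_iff.1 hnat
          exact (Nat.le_log_iff_pow_le (by norm_num) (by omega)).2 hle
        have := Finset.card_le_card hsubf
        rw [Finset.card_range] at this
        exact_mod_cast this
    _ = 2 ^ n * ((Nat.log 2 m : ℝ) + 1) * (cubeBmo f).toReal := by ring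

variable {n : ℕ}

/-- lower corner of grid cell `k` -/
def gridPt (b : Fin n → ℝ) (h : ℝ) {m : ℕ} (k : Fin n → Fin (m + 1)) : Fin n → ℝ :=
  fun i => b i + h * (k i : ℕ)

lemma grid_disjoint (b : Fin n → ℝ) {h : ℝ} (hh : 0 < h) {m : ℕ}
    {k k' : Fin n → Fin (m + 1)} (hkk : k ≠ k') :
    Disjoint (cube (gridPt b h k) h) (cube (gridPt b h k') h) := by
  rw [Set.disjoint_left]
  intro x hx hx'
  obtain ⟨i, hi⟩ : ∃ i, k i ≠ k' i := by
    by_contra hc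
    push_neg at hc
    exact hkk (funext hc)
  have h1 := hx i
  have h2 := hx' i
  simp only [gridPt] at h1 h2
  rcases lt_or_gt_of_ne hi with hlt | hlt
  · have : ((k i : ℕ) : ℝ) + 1 ≤ ((k' i : ℕ) : ℝ) := by
      have : (k i : ℕ) + 1 ≤ (k' i : ℕ) := hlt
      exact_mod_cast this
    nlinarith [h1.2, h2.1]
  · have : ((k' i : ℕ) : ℝ) + 1 ≤ ((k i : ℕ) : ℝ) := by
      have : (k' i : ℕ) + 1 ≤ (k i : ℕ) := hlt
      exact_mod_cast this
    nlinarith [h1.1, h2.2]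

/-- the index of the grid cell containing a point -/
lemma exists_grid_cell (b : Fin n → ℝ) {h : ℝ} (hh : 0 < h) {m : ℕ}
    {x : Fin n → ℝ} (hx : x ∈ cube b (((m : ℝ) + 1) * h)) :
    ∃ k : Fin n → Fin (m + 1), x ∈ cube (gridPt b h k) h ∧
      ∀ i, (k i : ℕ) = ⌊(x i - b i) / h⌋₊ := by
  have hflt : ∀ i, ⌊(x i - b i) / h⌋₊ < m + 1 := by
    intro i
    have h1 := (hx i).1
    have h2 := (hx i).2
    rw [Nat.floor_lt (div_nonneg (by linarith) hh.le)]
    rw [div_lt_iff₀ hh]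
    push_cast
    nlinarith
  refine ⟨fun i => ⟨⌊(x i - b i) / h⌋₊, hflt i⟩, fun i => ?_, fun i => rfl⟩
  have h1 := (hx i).1
  have hnn : 0 ≤ (x i - b i) / h := div_nonneg (by linarith) hh.le
  constructor
  · simp only [gridPt]
    have := Nat.floor_le hnn
    rw [le_div_iff₀ hh] at this
    linarith [this]
  · simp only [gridPt]
    have := Nat.lt_floor_add_one ((x i - b i) / h)
    rw [div_lt_iff₀ hh] at this
    push_cast
    push_cast at this
    nlinarith

lemma grid_union (b : Fin n → ℝ) {h : ℝ} (hh : 0 < h) (m : ℕ) :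
    ⋃ k ∈ (Finset.univ : Finset (Fin n → Fin (m + 1))), cube (gridPt b h k) h =
      cube b (((m : ℝ) + 1) * h) := by
  apply Set.Subset.antisymm
  · refine Set.iUnion₂_subset fun k _ => ?_
    intro x hx i
    have h1 := hx i
    simp only [gridPt] at h1
    have hk : ((k i : ℕ) : ℝ) ≤ m := by exact_mod_cast Nat.lt_succ_iff.1 (k i).isLt
    constructor
    · nlinarith [h1.1]
    · nlinarith [h1.2]
  · intro x hx
    obtain ⟨k, hk, -⟩ := exists_grid_cell b hh hx
    exact Set.mem_biUnion (Finset.mem_univ k) hk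

variable {n : ℕ}

def innerSet (ε : Fin n → Bool) (m : ℕ) : Finset (Fin n → Fin (m + 1)) :=
  Finset.univ.filter fun k => ∀ i, if ε i then 1 ≤ (k i : ℕ) else (k i : ℕ) < m

lemma mem_innerSet {ε : Fin n → Bool} {m : ℕ} {k : Fin n → Fin (m + 1)} :
    k ∈ innerSet ε m ↔ ∀ i, if ε i then 1 ≤ (k i : ℕ) else (k i : ℕ) < m := by
  simp [innerSet]

lemma inner_union {a b : Fin n → ℝ} {h : ℝ} (hh : 0 < h) {m : ℕ} (hm : 1 ≤ m)
    (ε : Fin n → Bool) (ha : ∀ i, if ε i then a i = b i + h else a i = b i) :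
    ⋃ k ∈ innerSet ε m, cube (gridPt b h k) h = cube a ((m : ℝ) * h) := by
  apply Set.Subset.antisymm
  · refine Set.iUnion₂_subset fun k hk => ?_
    rw [mem_innerSet] at hk
    intro x hx i
    have h1 := hx i
    simp only [gridPt] at h1
    have hki := hk i
    have hai := ha i
    cases hε : ε i
    · rw [hε] at hki hai
      simp only [if_false, Bool.false_eq_true] at hki hai
      have hkm : ((k i : ℕ) : ℝ) ≤ (m : ℝ) - 1 := by
        have : (k i : ℕ) + 1 ≤ m := hki
        have := (Nat.cast_le (α := ℝ)).2 this
        push_cast at this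
        linarith
      constructor
      · rw [hai]; nlinarith [h1.1, Nat.cast_nonneg (α := ℝ) (k i : ℕ)]
      · rw [hai]; nlinarith [h1.2]
    · rw [hε] at hki hai
      simp only [if_true] at hki hai
      have hk1 : (1 : ℝ) ≤ ((k i : ℕ) : ℝ) := by exact_mod_cast hki
      have hkm : ((k i : ℕ) : ℝ) ≤ (m : ℝ) := by
        exact_mod_cast Nat.lt_succ_iff.1 (k i).isLt
      constructor
      · rw [hai]; nlinarith [h1.1]
      · rw [hai]; nlinarith [h1.2]
  · intro x hx
    have hx'' : x ∈ cube b (((m : ℝ) + 1) * h) := by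
      intro i
      have h1 := hx i
      have hai := ha i
      cases hε : ε i <;> rw [hε] at hai <;> simp only [if_true, if_false, Bool.false_eq_true] at hai
      · exact ⟨by linarith [h1.1], by nlinarith [h1.2]⟩
      · exact ⟨by nlinarith [h1.1], by nlinarith [h1.2]⟩
    obtain ⟨k, hk, hkf⟩ := exists_grid_cell b hh hx''
    refine Set.mem_biUnion (mem_innerSet.2 fun i => ?_) hk
    have h1 := hx i
    have hai := ha i
    cases hε : ε i <;> rw [hε] at hai <;>
      simp only [if_true, if_false, Bool.false_eq_true] at hai ⊢
    · -- need k i < m,  from x i < a i + m h = b i + m h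
      rw [hkf i, Nat.floor_lt (div_nonneg (by rw [hai] at h1; linarith [h1.1]) hh.le)]
      rw [div_lt_iff₀ hh]
      rw [hai] at h1
      nlinarith [h1.2]
    · -- need 1 ≤ k i, from x i ≥ a i = b i + h
      rw [hkf i, Nat.le_floor_iff (div_nonneg (by rw [hai] at h1; nlinarith [h1.1]) hh.le)]
      rw [le_div_iff₀ hh]
      rw [hai] at h1
      push_cast
      nlinarith [h1.1]

lemma card_innerSet (ε : Fin n → Bool) {m : ℕ} (hm : 1 ≤ m) :
    (innerSet ε m).card = m ^ n := by
  have : innerSet ε m = Fintype.piFinset fun i =>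
      Finset.univ.filter fun x : Fin (m + 1) => if ε i then 1 ≤ (x : ℕ) else (x : ℕ) < m := by
    ext k
    simp [innerSet, Fintype.mem_piFinset]
  rw [this, Fintype.card_piFinset]
  have hcard : ∀ i, (Finset.univ.filter fun x : Fin (m + 1) =>
      if ε i then 1 ≤ (x : ℕ) else (x : ℕ) < m).card = m := by
    intro i
    cases hε : ε i
    · simp only [hε, Bool.false_eq_true, if_false]
      have he : (Finset.univ.filter fun x : Fin (m + 1) => (x : ℕ) < m) =
          Finset.univ.erase (Fin.last m) := by
        ext x
        simp only [Finset.mem_filter, Finset.mem_erase, Finset.mem_univ, true_and, and_true]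
        constructor
        · intro hx hx'
          rw [hx'] at hx
          simp [Fin.val_last] at hx
        · intro hx
          have h2 := x.isLt
          rcases Nat.lt_or_ge (x : ℕ) m with h | h
          · exact h
          · exact absurd (Fin.ext (by simp [Fin.val_last]; omega)) hx
      rw [he, Finset.card_erase_of_mem (Finset.mem_univ _), Finset.card_univ, Fintype.card_fin]
      omega
    · simp only [hε, if_true]
      have he : (Finset.univ.filter fun x : Fin (m + 1) => 1 ≤ (x : ℕ)) =
          Finset.univ.erase (0 : Fin (m + 1)) := by
        ext x
        simp only [Finset.mem_filter, Finset.mem_erase, Finset.mem_univ, true_and, and_true]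
        constructor
        · intro hx hx'
          rw [hx'] at hx
          simp at hx
        · intro hx
          have : (x : ℕ) ≠ 0 := fun hc => hx (Fin.ext (by simp [hc]))
          omega
      rw [he, Finset.card_erase_of_mem (Finset.mem_univ _), Finset.card_univ, Fintype.card_fin]
      omega
  rw [Finset.prod_congr rfl fun i _ => hcard i]
  simp

lemma log_aux {m : ℕ} (hm : 2 ≤ m) : (Nat.log 2 m : ℝ) + 2 ≤ 5 * Real.log m := by
  have h1 : (2:ℕ) ^ Nat.log 2 m ≤ m := Nat.pow_log_le_self 2 (by omega)
  have h1' : (2:ℝ) ^ (Nat.log 2 m) ≤ (m:ℝ) := by exact_mod_cast h1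
  have h2 : Real.log ((2:ℝ) ^ Nat.log 2 m) ≤ Real.log m :=
    Real.log_le_log (by positivity) h1'
  rw [Real.log_pow] at h2
  have h3 : Real.log 2 ≤ Real.log m := by
    apply Real.log_le_log (by norm_num)
    exact_mod_cast hm
  have h4 : (0.6931471803 : ℝ) < Real.log 2 := Real.log_two_gt_d9
  have h5 : (0:ℝ) ≤ (Nat.log 2 m : ℝ) := Nat.cast_nonneg _
  have h6 : (Nat.log 2 m : ℝ) * 0.6931471803 ≤ (Nat.log 2 m : ℝ) * Real.log 2 :=
    mul_le_mul_of_nonneg_left h4.le h5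
  linarith

lemma card_bound (n : ℕ) {m : ℕ} (hm : 1 ≤ m) :
    (((m + 1) ^ n - m ^ n : ℕ) : ℝ) ≤ (n : ℝ) * ((m : ℝ) + 1) ^ n / ((m : ℝ) + 1) := by
  have hle : m ^ n ≤ (m + 1) ^ n := Nat.pow_le_pow_left (by omega) n
  have hcast : (((m + 1) ^ n - m ^ n : ℕ) : ℝ) = ((m : ℝ) + 1) ^ n - (m : ℝ) ^ n := by
    rw [Nat.cast_sub hle]
    push_cast
    ring
  rw [hcast]
  have hm1 : (0:ℝ) < (m : ℝ) + 1 := by positivity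
  have hber := one_add_mul_le_pow (a := -(1 / ((m:ℝ) + 1)))
    (by
      have : (1:ℝ) / ((m:ℝ) + 1) ≤ 1 := by
        rw [div_le_one hm1]; linarith
      linarith) n
  have heq : (1 + -(1 / ((m:ℝ) + 1))) = (m : ℝ) / ((m : ℝ) + 1) := by field_simp; ring
  rw [heq] at hber
  have hber' : 1 - (n : ℝ) / ((m:ℝ) + 1) ≤ ((m:ℝ) / ((m:ℝ) + 1)) ^ n := by
    refine le_trans (le_of_eq ?_) hber
    ring
  have hp : (0:ℝ) < ((m:ℝ) + 1) ^ n := by positivity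
  have h6 : (1 - (n : ℝ) / ((m:ℝ) + 1)) * ((m:ℝ) + 1) ^ n ≤ (m : ℝ) ^ n := by
    calc (1 - (n : ℝ) / ((m:ℝ) + 1)) * ((m:ℝ) + 1) ^ n
        ≤ ((m:ℝ) / ((m:ℝ) + 1)) ^ n * ((m:ℝ) + 1) ^ n :=
          mul_le_mul_of_nonneg_right hber' hp.le
      _ = (m : ℝ) ^ n := by
          rw [div_pow]; field_simp
  have hexp : (1 - (n : ℝ) / ((m:ℝ) + 1)) * ((m:ℝ) + 1) ^ n =
      ((m:ℝ) + 1) ^ n - (n : ℝ) * ((m:ℝ) + 1) ^ n / ((m:ℝ) + 1) := by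
    field_simp
  rw [hexp] at h6
  linarith

end AvgDiff

open AvgDiff in
/-- comparison of averages over two cubes sharing a common vertex,
where `Q' = cube a (m·h) ⊆ Q'' = cube b (m·h + h)`. The common-vertex condition is
expressed by a choice `ε` of vertex: in each coordinate the cubes are aligned at
the lower ends (`ε i = false`) or at the upper ends (`ε i = true`). -/
theorem average_difference_common_vertex (n : ℕ) :
    ∃ C : ℝ, 0 < C ∧ ∀ f : (Fin n → ℝ) → ℝ,
      (∀ x, 0 ≤ f x) →
      LocallyIntegrable f volume →
      cubeBmo f < ⊤ →
      ∀ (a b : Fin n → ℝ) (h : ℝ) (m : ℕ), 0 < h → 2 ≤ m →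
        ∀ ε : Fin n → Bool,
          (∀ i, if ε i then a i + (m : ℝ) * h = b i + ((m : ℝ) * h + h) else a i = b i) →
          cube a ((m : ℝ) * h) ⊆ cube b ((m : ℝ) * h + h) →
          (⨍ x in cube a ((m : ℝ) * h), f x) - ⨍ x in cube b ((m : ℝ) * h + h), f x ≤
            C * (Real.log m / m) * (cubeBmo f).toReal := by
  classical
  refine ⟨((n : ℝ) + 1) * 2 ^ n * 5, by positivity, ?_⟩
  intro f hf0 hloc hbmo a b h m hh hm ε hε hsub
  have hm1 : 1 ≤ m := by omega
  have hmR : (2:ℝ) ≤ (m : ℝ) := by exact_mod_cast hm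
  have hbmo0 : (0:ℝ) ≤ (cubeBmo f).toReal := ENNReal.toReal_nonneg
  have hLeq : (m : ℝ) * h + h = ((m : ℝ) + 1) * h := by ring
  rw [hLeq] at hsub ⊢
  have hmh : (0:ℝ) < (m : ℝ) * h := by
    apply mul_pos _ hh; linarith
  have hLpos : (0:ℝ) < ((m : ℝ) + 1) * h := by nlinarith
  have ha : ∀ i, if ε i then a i = b i + h else a i = b i := by
    intro i
    have := hε i
    cases hεi : ε i <;> rw [hεi] at this <;>
      simp only [if_true, if_false, Bool.false_eq_true] at this ⊢ <;> linarith
  -- decomposition of integrals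
  have hdisj : ((Finset.univ : Finset (Fin n → Fin (m + 1))) : Set (Fin n → Fin (m+1))).Pairwise
      (Function.onFun Disjoint fun k => cube (gridPt b h k) h) := fun k _ k' _ hkk =>
    grid_disjoint b hh hkk
  have hT : (∫ x in cube b (((m : ℝ) + 1) * h), f x) =
      ∑ k : Fin n → Fin (m + 1), ∫ x in cube (gridPt b h k) h, f x := by
    rw [← grid_union b hh m]
    exact integral_biUnion_finset Finset.univ (fun k _ => measurableSet_cube _ _)
      hdisj (fun k _ => integrableOn_cube hloc _ _)
  have hI : (∫ x in cube a ((m : ℝ) * h), f x) =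
      ∑ k ∈ innerSet ε m, ∫ x in cube (gridPt b h k) h, f x := by
    rw [← inner_union hh hm1 ε ha]
    exact integral_biUnion_finset _ (fun k _ => measurableSet_cube _ _)
      (hdisj.mono (by simp)) (fun k _ => integrableOn_cube hloc _ _)
  set A' : ℝ := ⨍ x in cube a ((m : ℝ) * h), f x with hA'def
  set A'' : ℝ := ⨍ x in cube b (((m : ℝ) + 1) * h), f x with hA''def
  set I : (Fin n → Fin (m + 1)) → ℝ := fun k => ∫ x in cube (gridPt b h k) h, f x with hIdef
  set B : ℝ := 2 ^ n * ((Nat.log 2 m : ℝ) + 2) * (cubeBmo f).toReal with hBdef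
  -- per-cell bound
  have hB0 : 0 ≤ B := by
    rw [hBdef]; positivity
  have hcell : ∀ k : Fin n → Fin (m + 1), A' - (h ^ n)⁻¹ * I k ≤ B := by
    intro k
    have havgk : (h ^ n)⁻¹ * I k = ⨍ x in cube (gridPt b h k) h, f x :=
      (avg_eq f _ hh.le).symm
    rw [havgk]
    have t1 : |A' - A''| ≤ 2 ^ n * (cubeBmo f).toReal := by
      refine (avg_sub_avg_abs_le hloc hbmo hmh hLpos hsub).trans ?_
      have hr : (((m : ℝ) + 1) * h) / ((m : ℝ) * h) ≤ 2 := by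
        rw [div_le_iff₀ hmh]; nlinarith
      have hrn : ((((m : ℝ) + 1) * h) / ((m : ℝ) * h)) ^ n ≤ 2 ^ n :=
        pow_le_pow_left₀ (by positivity) hr n
      exact mul_le_mul_of_nonneg_right hrn hbmo0
    have hbc : ∀ i, b i ≤ gridPt b h k i ∧ gridPt b h k i + h ≤ b i + ((m : ℝ) + 1) * h := by
      intro i
      have hk : ((k i : ℕ) : ℝ) ≤ (m : ℝ) := by
        exact_mod_cast Nat.lt_succ_iff.1 (k i).isLt
      have hk0 : (0:ℝ) ≤ ((k i : ℕ) : ℝ) := Nat.cast_nonneg _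
      constructor
      · simp only [gridPt]; nlinarith
      · simp only [gridPt]; nlinarith
    have t2 : |(⨍ x in cube (gridPt b h k) h, f x) - A''| ≤
        2 ^ n * ((Nat.log 2 m : ℝ) + 1) * (cubeBmo f).toReal :=
      chain_bound hloc hbmo hh hm1 hbc
    calc A' - ⨍ x in cube (gridPt b h k) h, f x
        ≤ |A' - A''| + |(⨍ x in cube (gridPt b h k) h, f x) - A''| := by
          calc A' - ⨍ x in cube (gridPt b h k) h, f x
              = (A' - A'') - ((⨍ x in cube (gridPt b h k) h, f x) - A'') := by ring
            _ ≤ |(A' - A'') - ((⨍ x in cube (gridPt b h k) h, f x) - A'')| := le_abs_self _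
            _ ≤ |A' - A''| + |(⨍ x in cube (gridPt b h k) h, f x) - A''| := abs_sub _ _
      _ ≤ 2 ^ n * (cubeBmo f).toReal + 2 ^ n * ((Nat.log 2 m : ℝ) + 1) * (cubeBmo f).toReal :=
          add_le_add t1 t2
      _ = B := by rw [hBdef]; ring
  -- key identity
  have hsum_univ : ∑ k : Fin n → Fin (m + 1), I k = (((m : ℝ) + 1) * h) ^ n * A'' := by
    rw [hA''def, avg_eq f b hLpos.le, hT]
    have : ((((m : ℝ) + 1) * h) ^ n) ≠ 0 := by positivity
    field_simp
  have hsum_inner : ∑ k ∈ innerSet ε m, I k = ((m : ℝ) * h) ^ n * A' := by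
    rw [hA'def, avg_eq f a hmh.le, hI]
    have : (((m : ℝ) * h) ^ n) ≠ 0 := by positivity
    field_simp
  have hcard_univ : (Finset.univ : Finset (Fin n → Fin (m + 1))).card = (m + 1) ^ n := by
    rw [Finset.card_univ]
    simp [Fintype.card_fun]
  have hcard_sdiff : ((Finset.univ : Finset (Fin n → Fin (m + 1))) \ innerSet ε m).card
      = (m + 1) ^ n - m ^ n := by
    rw [Finset.card_sdiff_of_subset (Finset.subset_univ _), hcard_univ, card_innerSet ε hm1]
  have key : ∑ k ∈ (Finset.univ : Finset (Fin n → Fin (m + 1))) \ innerSet ε m,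
      (A' - (h ^ n)⁻¹ * I k) = (((m : ℝ) + 1) ^ n) * (A' - A'') := by
    rw [Finset.sum_sub_distrib, Finset.sum_const, nsmul_eq_mul,
      Finset.sum_sdiff_eq_sub (Finset.subset_univ _), hcard_sdiff,
      ← Finset.mul_sum, ← Finset.mul_sum]
    rw [hsum_univ, hsum_inner]
    have hcast : (((m + 1) ^ n - m ^ n : ℕ) : ℝ) = ((m:ℝ) + 1) ^ n - (m:ℝ) ^ n := by
      rw [Nat.cast_sub (Nat.pow_le_pow_left (by omega) n)]
      push_cast
      ring
    rw [hcast]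
    have hhn : (h:ℝ) ^ n ≠ 0 := by positivity
    rw [mul_pow, mul_pow]
    field_simp
    ring
  -- assemble
  have hXpos : (0:ℝ) < ((m:ℝ) + 1) ^ n := by positivity
  have hstep1 : A' - A'' = ((((m:ℝ) + 1) ^ n))⁻¹ *
      ∑ k ∈ (Finset.univ : Finset (Fin n → Fin (m + 1))) \ innerSet ε m,
        (A' - (h ^ n)⁻¹ * I k) := by
    rw [key]
    field_simp
  have hsum_le : ∑ k ∈ (Finset.univ : Finset (Fin n → Fin (m + 1))) \ innerSet ε m,
      (A' - (h ^ n)⁻¹ * I k) ≤ (((m + 1) ^ n - m ^ n : ℕ) : ℝ) * B := by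
    calc ∑ k ∈ (Finset.univ : Finset (Fin n → Fin (m + 1))) \ innerSet ε m,
        (A' - (h ^ n)⁻¹ * I k)
        ≤ ∑ _k ∈ (Finset.univ : Finset (Fin n → Fin (m + 1))) \ innerSet ε m, B :=
          Finset.sum_le_sum fun k _ => hcell k
      _ = (((m + 1) ^ n - m ^ n : ℕ) : ℝ) * B := by
          rw [Finset.sum_const, hcard_sdiff, nsmul_eq_mul]
  have hman : A' - A'' ≤ ((((m:ℝ) + 1) ^ n))⁻¹ * ((((m + 1) ^ n - m ^ n : ℕ) : ℝ) * B) := by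
    rw [hstep1]
    exact mul_le_mul_of_nonneg_left hsum_le (by positivity)
  have hcb := card_bound n hm1
  have hlog := log_aux hm
  have hfrac : ((((m:ℝ) + 1) ^ n))⁻¹ * (((m + 1) ^ n - m ^ n : ℕ) : ℝ) ≤
      (n:ℝ) / ((m:ℝ) + 1) := by
    have h2 : ((((m:ℝ) + 1) ^ n))⁻¹ * (((m + 1) ^ n - m ^ n : ℕ) : ℝ) ≤
        ((((m:ℝ) + 1) ^ n))⁻¹ * ((n : ℝ) * ((m : ℝ) + 1) ^ n / ((m : ℝ) + 1)) :=
      mul_le_mul_of_nonneg_left hcb (by positivity)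
    refine h2.trans (le_of_eq ?_)
    field_simp
  have hmain2 : A' - A'' ≤ ((n:ℝ) / ((m:ℝ) + 1)) * B := by
    calc A' - A'' ≤ ((((m:ℝ) + 1) ^ n))⁻¹ * ((((m + 1) ^ n - m ^ n : ℕ) : ℝ) * B) := hman
      _ = (((((m:ℝ) + 1) ^ n))⁻¹ * (((m + 1) ^ n - m ^ n : ℕ) : ℝ)) * B := by ring
      _ ≤ ((n:ℝ) / ((m:ℝ) + 1)) * B := mul_le_mul_of_nonneg_right hfrac hB0
  refine hmain2.trans ?_
  rw [hBdef]
  have hmpos : (0:ℝ) < (m:ℝ) := by linarith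
  have e1 : (n:ℝ) / ((m:ℝ) + 1) ≤ ((n:ℝ) + 1) / (m:ℝ) := by
    rw [div_le_div_iff₀ (by linarith) hmpos]
    nlinarith [Nat.cast_nonneg (α := ℝ) n]
  calc (n:ℝ) / ((m:ℝ) + 1) * (2 ^ n * ((Nat.log 2 m : ℝ) + 2) * (cubeBmo f).toReal)
      ≤ ((n:ℝ) + 1) / (m:ℝ) * (2 ^ n * (5 * Real.log m) * (cubeBmo f).toReal) := by
        apply mul_le_mul e1 _ (by positivity) (by positivity)
        apply mul_le_mul_of_nonneg_right _ hbmo0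
        exact mul_le_mul_of_nonneg_left hlog (by positivity)
    _ = ((n : ℝ) + 1) * 2 ^ n * 5 * (Real.log m / m) * (cubeBmo f).toReal := by ring
end
end

section
/- Define f : ℝ → ℝ by f(x) = log(log|x|) if |x| ≥ e and f(x) = 0 if |x| < e. Then f satisfies the three vanishing mean oscillation conditions: lim_{a→0} sup over intervals I with |I| ≤ a of (1/|I|)∫_I |f − f_I| = 0; lim_{a→∞} sup over intervals I with |I| ≥ a of (1/|I|)∫_I |f − f_I| = 0; and lim_{a→∞} sup over intervals I with I ⊆ ℝ∖[−a,a] of (1/|I|)∫_I |f − f_I| = 0. Consequently f belongs to CMO(ℝ). -/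
open MeasureTheory ENNReal Filter

noncomputable section

/-- The function `f(x) = log log |x|` for `|x| ≥ e`, and `0` otherwise. -/
def loglogFn (x : ℝ) : ℝ :=
  if Real.exp 1 ≤ |x| then Real.log (Real.log |x|) else 0

/-- Mean oscillation of `f` over the interval `(a, b)`. -/
def intervalOsc (f : ℝ → ℝ) (a b : ℝ) : ℝ :=
  ⨍ x in Set.Ioo a b, |f x - ⨍ y in Set.Ioo a b, f y|

open Real Set

lemma loglogFn_eq (x : ℝ) : loglogFn x = log (log (max (exp 1) |x|)) := by
  unfold loglogFn
  split_ifs with h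
  · rw [max_eq_right h]
  · rw [max_eq_left (le_of_not_ge h)]
    simp [Real.log_exp]

lemma one_le_log_max' (x : ℝ) : 1 ≤ log (max (exp 1) x) :=
  (Real.le_log_iff_exp_le (lt_of_lt_of_le (exp_pos 1) (le_max_left _ _))).2 (le_max_left _ _)

lemma loglogFn_nonneg (x : ℝ) : 0 ≤ loglogFn x := by
  rw [loglogFn_eq]; exact Real.log_nonneg (one_le_log_max' _)

lemma loglogFn_cont : Continuous loglogFn := by
  have hfe : loglogFn = fun x => log (log (max (exp 1) |x|)) := funext loglogFn_eq
  rw [hfe]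
  have c1 : Continuous fun x : ℝ => max (exp 1) |x| := continuous_const.max continuous_abs
  have c2 : Continuous fun x : ℝ => log (max (exp 1) |x|) :=
    Real.continuousOn_log.comp_continuous c1 fun x =>
      (ne_of_gt (lt_of_lt_of_le (exp_pos 1) (le_max_left _ _)))
  exact Real.continuousOn_log.comp_continuous c2 fun x =>
    (ne_of_gt (lt_of_lt_of_le one_pos (one_le_log_max' _)))

lemma loglogFn_neg (x : ℝ) : loglogFn (-x) = loglogFn x := by
  simp [loglogFn]

lemma loglogFn_of_le {x : ℝ} (hx : exp 1 ≤ x) : loglogFn x = log (log x) := by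
  rw [loglogFn_eq, abs_of_nonneg ((exp_pos 1).le.trans hx), max_eq_right hx]

lemma loglogFn_mono {u v : ℝ} (hu : 0 ≤ u) (huv : u ≤ v) : loglogFn u ≤ loglogFn v := by
  rw [loglogFn_eq, loglogFn_eq, abs_of_nonneg hu, abs_of_nonneg (hu.trans huv)]
  have h1 : (0:ℝ) < max (exp 1) u := lt_of_lt_of_le (exp_pos 1) (le_max_left _ _)
  exact Real.log_le_log (lt_of_lt_of_le one_pos (one_le_log_max' u))
    (Real.log_le_log h1 (max_le_max le_rfl huv))

/-- key: `log v - log u ≤ (v-u)/u`. -/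
lemma log_sub_log_le {u v : ℝ} (hu : 0 < u) (huv : u ≤ v) : log v - log u ≤ (v - u) / u := by
  have hv : 0 < v := hu.trans_le huv
  have h := Real.log_le_sub_one_of_pos (div_pos hv hu)
  rw [Real.log_div (ne_of_gt hv) (ne_of_gt hu)] at h
  have : v / u - 1 = (v - u) / u := by field_simp
  linarith [this ▸ h]

/-- `log log v - log log u ≤ (log v - log u)/log u` for `e ≤ u ≤ v`. -/
lemma loglog_sub_le {u v : ℝ} (hu : exp 1 ≤ u) (huv : u ≤ v) :
    log (log v) - log (log u) ≤ (log v - log u) / log u := by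
  have h1 : (1:ℝ) ≤ log u := (Real.le_log_iff_exp_le ((exp_pos 1).trans_le hu)).2 hu
  exact log_sub_log_le (lt_of_lt_of_le one_pos h1)
    (Real.log_le_log ((exp_pos 1).trans_le hu) huv)

/-- Lipschitz-type bound on `[e,∞)`. -/
lemma loglog_lip {u v : ℝ} (hu : exp 1 ≤ u) (huv : u ≤ v) :
    log (log v) - log (log u) ≤ (v - u) / exp 1 := by
  have h1 : (1:ℝ) ≤ log u := (Real.le_log_iff_exp_le ((exp_pos 1).trans_le hu)).2 hu
  have h2 : log u ≤ log v := Real.log_le_log ((exp_pos 1).trans_le hu) huv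
  have h3 := loglog_sub_le hu huv
  have h4 : (log v - log u) / log u ≤ log v - log u := by
    rw [div_le_iff₀ (by linarith)]
    nlinarith
  have h5 := log_sub_log_le ((exp_pos 1).trans_le hu) huv
  have h6 : (v - u) / u ≤ (v - u) / exp 1 := by
    apply div_le_div_of_nonneg_left (by linarith) (exp_pos 1) hu
  linarith

lemma max_abs_dist (x y : ℝ) : abs (max (exp 1) |x| - max (exp 1) |y|) ≤ |x - y| := by
  rw [max_comm (exp 1) |x|, max_comm (exp 1) |y|]
  calc abs (max |x| (exp 1) - max |y| (exp 1)) ≤ abs (|x| - |y|) := abs_max_sub_max_le_abs _ _ _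
    _ ≤ |x - y| := abs_abs_sub_abs_le_abs_sub x y

lemma loglogFn_dist (x y : ℝ) : |loglogFn x - loglogFn y| ≤ |x - y| / exp 1 := by
  have hnn : (0:ℝ) ≤ |x - y| / exp 1 := div_nonneg (abs_nonneg _) (exp_pos 1).le
  rw [abs_sub_le_iff]
  have key : ∀ u v : ℝ, max (exp 1) |u| ≤ max (exp 1) |v| →
      loglogFn v - loglogFn u ≤ |v - u| / exp 1 ∧ loglogFn u - loglogFn v ≤ |v - u| / exp 1 := by
    intro u v h
    have h1 : exp 1 ≤ max (exp 1) |u| := le_max_left _ _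
    have hd : max (exp 1) |v| - max (exp 1) |u| ≤ |v - u| :=
      (le_abs_self _).trans (max_abs_dist v u)
    have hmono : loglogFn u ≤ loglogFn v := by
      rw [loglogFn_eq, loglogFn_eq]
      exact Real.log_le_log (lt_of_lt_of_le one_pos (one_le_log_max' _))
        (Real.log_le_log ((exp_pos 1).trans_le h1) h)
    constructor
    · have := loglog_lip h1 h
      rw [loglogFn_eq u, loglogFn_eq v]
      refine this.trans ?_
      gcongr
    · have : (0:ℝ) ≤ |v - u| / exp 1 := div_nonneg (abs_nonneg _) (exp_pos 1).le
      linarith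
  rcases le_total (max (exp 1) |x|) (max (exp 1) |y|) with h | h
  · have := key x y h
    rw [abs_sub_comm] at this
    exact ⟨this.2, this.1⟩
  · exact ⟨(key y x h).1, (key y x h).2⟩

lemma intervalOsc_eq (f : ℝ → ℝ) {a b : ℝ} (hab : a < b) :
    intervalOsc f a b =
      (b - a)⁻¹ * ∫ x in Ioo a b, |f x - (b - a)⁻¹ * ∫ y in Ioo a b, f y| := by
  unfold intervalOsc
  rw [setAverage_eq, setAverage_eq, measureReal_def, Real.volume_Ioo,
    ENNReal.toReal_ofReal (by linarith : (0:ℝ) ≤ b - a)]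
  simp [smul_eq_mul]

lemma intervalOsc_le_avg (f : ℝ → ℝ) {a b : ℝ} (hab : a < b) (c : ℝ)
    (hf : IntegrableOn f (Ioo a b)) :
    intervalOsc f a b ≤ 2 * ((b - a)⁻¹ * ∫ x in Ioo a b, |f x - c|) := by
  have hβ : (0:ℝ) < b - a := by linarith
  set m := (b - a)⁻¹ * ∫ y in Ioo a b, f y with hm
  rw [intervalOsc_eq f hab]
  have hvol : volume (Ioo a b) < ⊤ := by rw [Real.volume_Ioo]; exact ofReal_lt_top
  have hconst : ∀ C : ℝ, IntegrableOn (fun _ => C) (Ioo a b) volume :=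
    fun C => integrableOn_const hvol.ne
  have hfc : IntegrableOn (fun x => |f x - c|) (Ioo a b) := (hf.sub (hconst c)).abs
  have hfm : IntegrableOn (fun x => |f x - m|) (Ioo a b) := (hf.sub (hconst m)).abs
  have hA : (0:ℝ) ≤ ∫ x in Ioo a b, |f x - c| := integral_nonneg fun x => abs_nonneg _
  have h1 : |m - c| ≤ (b - a)⁻¹ * ∫ x in Ioo a b, |f x - c| := by
    have hIc : ∫ x in Ioo a b, (f x - c) = (∫ x in Ioo a b, f x) - (b - a) * c := by
      rw [integral_sub hf (hconst c), setIntegral_const, measureReal_def, Real.volume_Ioo,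
        ENNReal.toReal_ofReal hβ.le, smul_eq_mul]
    have hmc : m - c = (b - a)⁻¹ * ∫ x in Ioo a b, (f x - c) := by
      rw [hIc, hm]; field_simp
    rw [hmc, abs_mul, abs_of_nonneg (inv_nonneg.2 hβ.le)]
    refine mul_le_mul_of_nonneg_left ?_ (inv_nonneg.2 hβ.le)
    simpa [Real.norm_eq_abs] using
      norm_integral_le_integral_norm (μ := volume.restrict (Ioo a b)) fun x => f x - c
  have h2 : ∫ x in Ioo a b, |f x - m| ≤ (∫ x in Ioo a b, |f x - c|) + (b - a) * |m - c| := by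
    have hpt : ∀ x, |f x - m| ≤ |f x - c| + |m - c| := fun x => by
      calc |f x - m| ≤ |f x - c| + |c - m| := abs_sub_le _ _ _
        _ = |f x - c| + |m - c| := by rw [abs_sub_comm c m]
    calc ∫ x in Ioo a b, |f x - m| ≤ ∫ x in Ioo a b, (|f x - c| + |m - c|) :=
          integral_mono hfm (hfc.add (hconst _)) hpt
      _ = (∫ x in Ioo a b, |f x - c|) + (b - a) * |m - c| := by
          rw [integral_add hfc (hconst _), setIntegral_const, measureReal_def, Real.volume_Ioo,
            ENNReal.toReal_ofReal hβ.le, smul_eq_mul]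
  have h3 : ∫ x in Ioo a b, |f x - m| ≤ 2 * ∫ x in Ioo a b, |f x - c| := by
    have : (b - a) * |m - c| ≤ ∫ x in Ioo a b, |f x - c| := by
      calc (b - a) * |m - c| ≤ (b - a) * ((b - a)⁻¹ * ∫ x in Ioo a b, |f x - c|) :=
            mul_le_mul_of_nonneg_left h1 hβ.le
        _ = ∫ x in Ioo a b, |f x - c| := by field_simp
    linarith
  calc (b - a)⁻¹ * ∫ x in Ioo a b, |f x - m| ≤ (b - a)⁻¹ * (2 * ∫ x in Ioo a b, |f x - c|) :=
        mul_le_mul_of_nonneg_left h3 (inv_nonneg.2 hβ.le)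
    _ = 2 * ((b - a)⁻¹ * ∫ x in Ioo a b, |f x - c|) := by ring

lemma loglogFn_int {a b : ℝ} : IntegrableOn loglogFn (Ioo a b) :=
  (loglogFn_cont.integrableOn_Icc).mono_set Ioo_subset_Icc_self

lemma loglogFn_abs_int {a b c : ℝ} : IntegrableOn (fun x => |loglogFn x - c|) (Ioo a b) :=
  (((loglogFn_cont.sub continuous_const).abs).integrableOn_Icc).mono_set Ioo_subset_Icc_self

lemma setIntegral_Ioo_neg (g : ℝ → ℝ) {a b : ℝ} (hab : a ≤ b) :
    ∫ x in Ioo a b, g (-x) = ∫ x in Ioo (-b) (-a), g x := by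
  rw [← integral_Ioc_eq_integral_Ioo, ← intervalIntegral.integral_of_le hab,
    intervalIntegral.integral_comp_neg g,
    intervalIntegral.integral_of_le (by linarith : -b ≤ -a), integral_Ioc_eq_integral_Ioo]

lemma intervalOsc_reflect {a b : ℝ} (hab : a < b) :
    intervalOsc loglogFn a b = intervalOsc loglogFn (-b) (-a) := by
  have hab' : -b < -a := by linarith
  rw [intervalOsc_eq _ hab, intervalOsc_eq _ hab']
  have hβ : -a - -b = b - a := by ring
  rw [hβ]
  have hI : ∫ y in Ioo (-b) (-a), loglogFn y = ∫ y in Ioo a b, loglogFn y := by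
    rw [← setIntegral_Ioo_neg loglogFn hab.le]
    simp only [loglogFn_neg]
  rw [hI]
  set c := (b - a)⁻¹ * ∫ y in Ioo a b, loglogFn y with hc
  have := setIntegral_Ioo_neg (fun x => |loglogFn x - c|) hab.le
  simp only [loglogFn_neg] at this
  rw [← this]

lemma osc_short {a b : ℝ} (hab : a < b) :
    intervalOsc loglogFn a b ≤ 2 * (b - a) / exp 1 := by
  have hβ : (0:ℝ) < b - a := by linarith
  refine (intervalOsc_le_avg loglogFn hab (loglogFn a) loglogFn_int).trans ?_
  have hint : ∫ x in Ioo a b, |loglogFn x - loglogFn a| ≤ (b - a) * ((b - a) / exp 1) := by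
    have h1 : ∫ x in Ioo a b, |loglogFn x - loglogFn a|
        ≤ ∫ _x in Ioo a b, ((b - a) / exp 1) := by
      refine setIntegral_mono_on loglogFn_abs_int
        (integrableOn_const (by rw [Real.volume_Ioo]; exact ofReal_ne_top))
        measurableSet_Ioo fun x hx => ?_
      refine (loglogFn_dist x a).trans ?_
      have : |x - a| ≤ b - a := by
        rw [abs_of_nonneg (by linarith [hx.1] : (0:ℝ) ≤ x - a)]; linarith [hx.2]
      gcongr
    rw [setIntegral_const, measureReal_def, Real.volume_Ioo, ENNReal.toReal_ofReal hβ.le, smul_eq_mul] at h1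
    exact h1
  calc 2 * ((b - a)⁻¹ * ∫ x in Ioo a b, |loglogFn x - loglogFn a|)
      ≤ 2 * ((b - a)⁻¹ * ((b - a) * ((b - a) / exp 1))) := by
        refine mul_le_mul_of_nonneg_left (mul_le_mul_of_nonneg_left hint (inv_nonneg.2 hβ.le))
          (by norm_num)
    _ = 2 * (b - a) / exp 1 := by field_simp

lemma integral_logb_sub {a b : ℝ} (h0 : 0 < a) (hab : a ≤ b) :
    ∫ x in Ioo a b, (Real.log b - Real.log x) ≤ b - a := by
  have h0' : (0:ℝ) ∉ uIcc a b := by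
    rw [uIcc_of_le hab]; intro h; exact absurd h.1 (not_le.2 h0)
  rw [← integral_Ioc_eq_integral_Ioo, ← intervalIntegral.integral_of_le hab,
    intervalIntegral.integral_sub intervalIntegrable_const (intervalIntegral.intervalIntegrable_log h0'),
    intervalIntegral.integral_const, integral_log, smul_eq_mul]
  have h1 : 0 ≤ a * (Real.log b - Real.log a) :=
    mul_nonneg h0.le (sub_nonneg.2 (Real.log_le_log h0 hab))
  nlinarith

lemma osc_right {a b : ℝ} (ha : exp 1 ≤ a) (hab : a < b) :
    intervalOsc loglogFn a b ≤ 2 / Real.log a := by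
  have hβ : (0:ℝ) < b - a := by linarith
  have h0 : (0:ℝ) < a := (exp_pos 1).trans_le ha
  have hla : (1:ℝ) ≤ Real.log a := (Real.le_log_iff_exp_le h0).2 ha
  have hla0 : (0:ℝ) < Real.log a := lt_of_lt_of_le one_pos hla
  refine (intervalOsc_le_avg loglogFn hab (loglogFn b) loglogFn_int).trans ?_
  have hint : ∫ x in Ioo a b, |loglogFn x - loglogFn b| ≤ (b - a) / Real.log a := by
    have hgint : IntegrableOn (fun x => (Real.log b - Real.log x) / Real.log a) (Ioo a b) := by
      refine ((ContinuousOn.integrableOn_compact isCompact_Icc ?_)).mono_set Ioo_subset_Icc_self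
      exact (continuousOn_const.sub (Real.continuousOn_log.mono (fun x hx => by
        simp only [mem_compl_iff, mem_singleton_iff]
        exact ne_of_gt (lt_of_lt_of_le h0 hx.1)))).div_const _
    have h1 : ∫ x in Ioo a b, |loglogFn x - loglogFn b|
        ≤ ∫ x in Ioo a b, ((Real.log b - Real.log x) / Real.log a) := by
      refine setIntegral_mono_on loglogFn_abs_int hgint measurableSet_Ioo fun x hx => ?_
      have hex : exp 1 ≤ x := ha.trans hx.1.le
      have hxb : x ≤ b := hx.2.le
      have hmono : loglogFn x ≤ loglogFn b :=
        loglogFn_mono ((exp_pos 1).le.trans hex) hxb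
      rw [abs_of_nonpos (by linarith), loglogFn_of_le hex, loglogFn_of_le (hex.trans hxb)]
      have h2 := loglog_sub_le hex hxb
      have hlx : (1:ℝ) ≤ Real.log x := (Real.le_log_iff_exp_le ((exp_pos 1).trans_le hex)).2 hex
      have h3 : (Real.log b - Real.log x) / Real.log x ≤ (Real.log b - Real.log x) / Real.log a := by
        apply div_le_div_of_nonneg_left
        · exact sub_nonneg.2 (Real.log_le_log ((exp_pos 1).trans_le hex) hxb)
        · exact hla0
        · exact Real.log_le_log ((exp_pos 1).trans_le ha) hx.1.le
      linarith
    have h2 : ∫ x in Ioo a b, ((Real.log b - Real.log x) / Real.log a)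
        = (∫ x in Ioo a b, (Real.log b - Real.log x)) / Real.log a := integral_div _ _
    rw [h2] at h1
    refine h1.trans ?_
    gcongr
    exact integral_logb_sub h0 hab.le
  calc 2 * ((b - a)⁻¹ * ∫ x in Ioo a b, |loglogFn x - loglogFn b|)
      ≤ 2 * ((b - a)⁻¹ * ((b - a) / Real.log a)) := by
        refine mul_le_mul_of_nonneg_left (mul_le_mul_of_nonneg_left hint (inv_nonneg.2 hβ.le))
          (by norm_num)
    _ = 2 / Real.log a := by field_simp

lemma osc_central {a b M : ℝ} (hab : a < b) (haM : -M ≤ a) (hbM : b ≤ M)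
    (hM : Real.exp 1 * Real.exp 1 ≤ M) :
    intervalOsc loglogFn a b ≤
      (b - a)⁻¹ * (4 * (Real.sqrt M * Real.log (Real.log M)) + 8 * (M / Real.log M)) := by
  have hee : Real.exp 1 * Real.exp 1 = Real.exp 2 := by
    rw [← Real.exp_add]; norm_num
  have he1 : (1:ℝ) < Real.exp 1 := by
    have := Real.add_one_le_exp 1; linarith
  have heM : Real.exp 1 ≤ M := le_trans (by nlinarith) hM
  have hM0 : (0:ℝ) < M := lt_of_lt_of_le (Real.exp_pos 1) heM
  have hM1 : (1:ℝ) ≤ M := le_trans he1.le heM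
  have hsM : Real.exp 1 ≤ Real.sqrt M := by
    have : Real.sqrt (Real.exp 1 * Real.exp 1) = Real.exp 1 :=
      Real.sqrt_mul_self (Real.exp_pos 1).le
    calc Real.exp 1 = Real.sqrt (Real.exp 1 * Real.exp 1) := this.symm
      _ ≤ Real.sqrt M := Real.sqrt_le_sqrt hM
  have hsM0 : (0:ℝ) < Real.sqrt M := lt_of_lt_of_le (Real.exp_pos 1) hsM
  have hlogM : (2:ℝ) ≤ Real.log M := by
    calc (2:ℝ) = Real.log (Real.exp 2) := (Real.log_exp 2).symm
      _ ≤ Real.log M := Real.log_le_log (Real.exp_pos 2) (hee ▸ hM)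
  have hlogM0 : (0:ℝ) < Real.log M := by linarith
  set c := Real.log (Real.log M) with hc
  have hcM : loglogFn M = c := loglogFn_of_le heM
  have hc0 : 0 ≤ c := hcM ▸ loglogFn_nonneg M
  have hub : ∀ x : ℝ, -M ≤ x → x ≤ M → loglogFn x ≤ c := by
    intro x h1 h2
    have habs : loglogFn x = loglogFn |x| := by
      rcases abs_cases x with ⟨h, _⟩ | ⟨h, _⟩
      · rw [h]
      · rw [h, loglogFn_neg]
    rw [habs, ← hcM]
    exact loglogFn_mono (abs_nonneg x) (abs_le.2 ⟨h1, h2⟩)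
  set g : ℝ → ℝ := fun x => c - loglogFn x with hg
  have hgc : Continuous g := continuous_const.sub loglogFn_cont
  have hβ : (0:ℝ) < b - a := by linarith
  refine (intervalOsc_le_avg loglogFn hab c loglogFn_int).trans ?_
  have step1 : ∫ x in Ioo a b, |loglogFn x - c| = ∫ x in Ioo a b, g x := by
    refine setIntegral_congr_fun measurableSet_Ioo fun x hx => ?_
    have := hub x (by linarith [hx.1]) (by linarith [hx.2])
    simp only [hg]
    rw [abs_of_nonpos (by linarith)]
    ring
  have step2 : ∫ x in Ioo a b, g x ≤ ∫ x in Ioo (-M) M, g x := by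
    refine setIntegral_mono_set (hgc.integrableOn_Icc.mono_set Ioo_subset_Icc_self) ?_
      ((Ioo_subset_Ioo haM hbM).eventuallyLE)
    refine (ae_restrict_iff' measurableSet_Ioo).2 (ae_of_all _ fun x hx => ?_)
    simp only [hg, Pi.zero_apply]
    have := hub x hx.1.le hx.2.le
    linarith
  have hMM : -M ≤ M := by linarith
  have step3 : ∫ x in Ioo (-M) M, g x = 2 * ∫ x in (0:ℝ)..M, g x := by
    rw [← integral_Ioc_eq_integral_Ioo, ← intervalIntegral.integral_of_le hMM,
      ← intervalIntegral.integral_add_adjacent_intervals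
        (hgc.intervalIntegrable (-M) 0) (hgc.intervalIntegrable 0 M)]
    have key := intervalIntegral.integral_comp_neg (a := 0) (b := M) g
    simp only [neg_zero] at key
    have key2 : ∫ x in (0:ℝ)..M, g (-x) = ∫ x in (0:ℝ)..M, g x := by
      congr 1
      funext x
      simp only [hg, loglogFn_neg]
    rw [← key, key2]; ring
  have step4 : ∫ x in (0:ℝ)..Real.sqrt M, g x ≤ Real.sqrt M * c := by
    have h1 : ∫ x in (0:ℝ)..Real.sqrt M, g x ≤ ∫ _x in (0:ℝ)..Real.sqrt M, c := by
      refine intervalIntegral.integral_mono_on hsM0.le (hgc.intervalIntegrable _ _)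
        intervalIntegrable_const fun x _ => ?_
      simp only [hg]
      linarith [loglogFn_nonneg x]
    rwa [intervalIntegral.integral_const, sub_zero, smul_eq_mul] at h1
  have step5 : ∫ x in Real.sqrt M..M, g x ≤ 2 / Real.log M * M := by
    have hsMM : Real.sqrt M ≤ M := by
      calc Real.sqrt M ≤ Real.sqrt (M * M) := Real.sqrt_le_sqrt (by nlinarith)
        _ = M := Real.sqrt_mul_self hM0.le
    have hrhsint : IntervalIntegrable (fun x => 2 / Real.log M * (Real.log M - Real.log x))
        volume (Real.sqrt M) M := by
      apply ContinuousOn.intervalIntegrable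
      refine continuousOn_const.mul (continuousOn_const.sub (Real.continuousOn_log.mono fun x hx => ?_))
      simp only [mem_compl_iff, mem_singleton_iff]
      rcases mem_uIcc.1 hx with h | h
      · exact ne_of_gt (lt_of_lt_of_le hsM0 h.1)
      · exact ne_of_gt (lt_of_lt_of_le (hsM0.trans_le hsMM) h.1)
    have h1 : ∫ x in Real.sqrt M..M, g x
        ≤ ∫ x in Real.sqrt M..M, 2 / Real.log M * (Real.log M - Real.log x) := by
      refine intervalIntegral.integral_mono_on hsMM (hgc.intervalIntegrable _ _) hrhsint
        fun x hx => ?_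
      have hex : Real.exp 1 ≤ x := hsM.trans hx.1
      have hx0 : (0:ℝ) < x := (Real.exp_pos 1).trans_le hex
      have hlx : Real.log (Real.sqrt M) ≤ Real.log x := Real.log_le_log hsM0 hx.1
      have hlsM : Real.log (Real.sqrt M) = Real.log M / 2 := Real.log_sqrt hM0.le
      have hlx1 : (1:ℝ) ≤ Real.log x := (Real.le_log_iff_exp_le hx0).2 hex
      have hsub := loglog_sub_le hex hx.2
      have hnum : 0 ≤ Real.log M - Real.log x := sub_nonneg.2 (Real.log_le_log hx0 hx.2)
      have h3 : (Real.log M - Real.log x) / Real.log x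
          ≤ (Real.log M - Real.log x) / (Real.log M / 2) := by
        apply div_le_div_of_nonneg_left hnum (by linarith) (by linarith [hlsM ▸ hlx])
      simp only [hg]
      rw [loglogFn_of_le hex]
      have h4 : (Real.log M - Real.log x) / (Real.log M / 2)
          = 2 / Real.log M * (Real.log M - Real.log x) := by
        field_simp
      have hcx : c - Real.log (Real.log x) ≤ (Real.log M - Real.log x) / Real.log x := hsub
      linarith [h4 ▸ h3]
    refine h1.trans ?_
    rw [intervalIntegral.integral_const_mul]
    have h2 : ∫ x in Real.sqrt M..M, (Real.log M - Real.log x) ≤ M := by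
      rw [intervalIntegral.integral_of_le hsMM, integral_Ioc_eq_integral_Ioo]
      refine (integral_logb_sub hsM0 hsMM).trans ?_
      linarith
    exact mul_le_mul_of_nonneg_left h2 (by positivity)
  have step6 : ∫ x in (0:ℝ)..M, g x = (∫ x in (0:ℝ)..Real.sqrt M, g x) + ∫ x in Real.sqrt M..M, g x :=
    (intervalIntegral.integral_add_adjacent_intervals (hgc.intervalIntegrable _ _)
      (hgc.intervalIntegrable _ _)).symm
  have total : ∫ x in Ioo a b, |loglogFn x - c|
      ≤ 2 * (Real.sqrt M * c + 2 / Real.log M * M) := by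
    rw [step1]
    refine step2.trans ?_
    rw [step3, step6]
    have := add_le_add step4 step5
    linarith
  have final : 2 * ((b - a)⁻¹ * ∫ x in Ioo a b, |loglogFn x - c|)
      ≤ 2 * ((b - a)⁻¹ * (2 * (Real.sqrt M * c + 2 / Real.log M * M))) :=
    mul_le_mul_of_nonneg_left (mul_le_mul_of_nonneg_left total (inv_nonneg.2 hβ.le))
      (by norm_num)
  refine final.trans (le_of_eq ?_)
  field_simp
  ring

lemma sqrt_self_le {x : ℝ} (hx : 0 ≤ x) : Real.sqrt x ≤ max 1 x := by
  rcases le_total x 1 with h | h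
  · calc Real.sqrt x ≤ Real.sqrt 1 := Real.sqrt_le_sqrt h
      _ = 1 := Real.sqrt_one
      _ ≤ max 1 x := le_max_left _ _
  · calc Real.sqrt x ≤ Real.sqrt (x * x) := Real.sqrt_le_sqrt (by nlinarith)
      _ = x := Real.sqrt_mul_self hx
      _ ≤ max 1 x := le_max_right _ _

lemma sqrt_le_self' {x : ℝ} (hx : 1 ≤ x) : Real.sqrt x ≤ x := by
  have := sqrt_self_le (by linarith : (0:ℝ) ≤ x)
  rwa [max_eq_right hx] at this

lemma sqrt2_le_two : Real.sqrt 2 ≤ 2 := by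
  nlinarith [Real.sq_sqrt (by norm_num : (0:ℝ) ≤ 2), Real.sqrt_nonneg 2]

lemma sqrt2_prod_le : Real.sqrt 2 * Real.sqrt (Real.sqrt 2) ≤ 2 := by
  have hss2 : Real.sqrt (Real.sqrt 2) ≤ Real.sqrt 2 := Real.sqrt_le_sqrt sqrt2_le_two
  nlinarith [Real.mul_self_sqrt (by norm_num : (0:ℝ) ≤ 2), Real.sqrt_nonneg 2,
    Real.sqrt_nonneg (Real.sqrt 2)]

set_option maxHeartbeats 1000000 in
lemma osc_long {a b t : ℝ} (ht : Real.exp 4 ≤ t) (hab : a < b) (hL : t ≤ b - a) :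
    intervalOsc loglogFn a b ≤
      32 / Real.sqrt (Real.sqrt t) + 36 / Real.log t := by
  have he2 : (2:ℝ) ≤ Real.exp 1 := by linarith [Real.add_one_le_exp 1]
  have hee4 : Real.exp 1 * Real.exp 1 * (Real.exp 1 * Real.exp 1) = Real.exp 4 := by
    rw [show (4:ℝ) = 1 + 1 + 1 + 1 by norm_num, Real.exp_add, Real.exp_add, Real.exp_add]
    ring
  have hsq4 : Real.sqrt (Real.exp 4) = Real.exp 1 * Real.exp 1 := by
    rw [← hee4]; exact Real.sqrt_mul_self (by positivity)
  have h4e : (4:ℝ) ≤ Real.exp 1 * Real.exp 1 := by nlinarith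
  have ht16 : (16:ℝ) ≤ t := le_trans (by nlinarith) ht
  have ht0 : (0:ℝ) < t := by linarith
  have hst : Real.exp 1 * Real.exp 1 ≤ Real.sqrt t := by
    rw [← hsq4]; exact Real.sqrt_le_sqrt ht
  have hst1 : Real.exp 1 ≤ Real.sqrt t := le_trans (by nlinarith) hst
  have hst0 : (0:ℝ) < Real.sqrt t := lt_of_lt_of_le (Real.exp_pos 1) hst1
  have hsst0 : (0:ℝ) < Real.sqrt (Real.sqrt t) := Real.sqrt_pos.2 hst0
  have hlogt : (4:ℝ) ≤ Real.log t := by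
    calc (4:ℝ) = Real.log (Real.exp 4) := (Real.log_exp 4).symm
      _ ≤ Real.log t := Real.log_le_log (Real.exp_pos 4) ht
  have hlogt0 : (0:ℝ) < Real.log t := by linarith
  have hlst : Real.log (Real.sqrt t) = Real.log t / 2 := Real.log_sqrt ht0.le
  have hL0 : (0:ℝ) < b - a := by linarith
  have hterm1_nonneg : (0:ℝ) ≤ 32 / Real.sqrt (Real.sqrt t) := by positivity
  by_cases hcase1 : Real.sqrt t ≤ a
  · -- right far interval
    have ha : Real.exp 1 ≤ a := hst1.trans hcase1
    refine (osc_right ha hab).trans ?_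
    have hla : Real.log (Real.sqrt t) ≤ Real.log a :=
      Real.log_le_log hst0 hcase1
    have h1 : 2 / Real.log a ≤ 2 / (Real.log t / 2) := by
      rw [← hlst]
      apply div_le_div_of_nonneg_left (by norm_num) (by rw [hlst]; linarith) hla
    have h2 : 2 / (Real.log t / 2) = 4 / Real.log t := by field_simp; ring
    have h3 : 4 / Real.log t ≤ 36 / Real.log t := by gcongr; norm_num
    linarith
  · by_cases hcase2 : b ≤ -Real.sqrt t
    · rw [intervalOsc_reflect hab]
      have ha : Real.exp 1 ≤ -b := le_trans hst1 (by linarith)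
      refine (osc_right ha (by linarith : -b < -a)).trans ?_
      have hla : Real.log (Real.sqrt t) ≤ Real.log (-b) :=
        Real.log_le_log hst0 (by linarith)
      have h1 : 2 / Real.log (-b) ≤ 2 / (Real.log t / 2) := by
        rw [← hlst]
        apply div_le_div_of_nonneg_left (by norm_num) (by rw [hlst]; linarith) hla
      have h2 : 2 / (Real.log t / 2) = 4 / Real.log t := by field_simp; ring
      have h3 : 4 / Real.log t ≤ 36 / Real.log t := by gcongr; norm_num
      linarith
    · push_neg at hcase1 hcase2
      set L := b - a with hLdef
      set M := max (-a) b with hMdef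
      have hbM : b ≤ M := le_max_right _ _
      have haM : -M ≤ a := by
        have : -a ≤ M := le_max_left _ _
        linarith
      have hstt : Real.sqrt t ≤ t := sqrt_le_self' (by linarith)
      have hM2L : M ≤ 2 * L := by
        have h1 : b ≤ 2 * L := by
          have : b = a + L := by rw [hLdef]; ring
          nlinarith [hcase1, hL, hstt]
        have h2 : -a ≤ 2 * L := by
          have : -a = L - b := by rw [hLdef]; ring
          nlinarith [hcase2, hL, hstt]
        exact max_le h2 h1
      have hLM : L ≤ 2 * M := by
        have h1 : -a ≤ M := le_max_left _ _
        have : L = b + -a := by rw [hLdef]; ring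
        linarith [hbM]
      have hMee : Real.exp 1 * Real.exp 1 ≤ M := by nlinarith
      have hM0 : (0:ℝ) < M := lt_of_lt_of_le (by positivity) hMee
      have hM1 : (1:ℝ) ≤ M := by nlinarith
      have hlogM2 : (2:ℝ) ≤ Real.log M := by
        have : Real.exp 1 * Real.exp 1 = Real.exp 2 := by rw [← Real.exp_add]; norm_num
        calc (2:ℝ) = Real.log (Real.exp 2) := (Real.log_exp 2).symm
          _ ≤ Real.log M := Real.log_le_log (Real.exp_pos 2) (this ▸ hMee)
      have hlogM0 : (0:ℝ) < Real.log M := by linarith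
      refine (osc_central hab haM hbM hMee).trans ?_
      rw [mul_add]
      -- term 1 : L⁻¹ * (4 * (√M * log log M)) ≤ 32 / √√t
      have hsM0 : (0:ℝ) < Real.sqrt M := Real.sqrt_pos.2 hM0
      have hssM0 : (0:ℝ) < Real.sqrt (Real.sqrt M) := Real.sqrt_pos.2 hsM0
      have hc_le : Real.log (Real.log M) ≤ 4 * Real.sqrt (Real.sqrt M) := by
        have h1 : Real.log (Real.log M) ≤ Real.log M := by
          apply Real.log_le_log hlogM0
          linarith [Real.log_le_sub_one_of_pos hM0]
        have h2 : Real.log M = 4 * Real.log (Real.sqrt (Real.sqrt M)) := by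
          rw [Real.log_sqrt (Real.sqrt_nonneg M), Real.log_sqrt hM0.le]; ring
        have h3 : Real.log (Real.sqrt (Real.sqrt M)) ≤ Real.sqrt (Real.sqrt M) := by
          linarith [Real.log_le_sub_one_of_pos hssM0]
        linarith
      have ht1 : L⁻¹ * (4 * (Real.sqrt M * Real.log (Real.log M)))
          ≤ 32 / Real.sqrt (Real.sqrt t) := by
        have h4 : Real.sqrt M * Real.log (Real.log M)
            ≤ 4 * (Real.sqrt M * Real.sqrt (Real.sqrt M)) := by
          have := mul_le_mul_of_nonneg_left hc_le hsM0.le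
          linarith [this]
        have h5 : Real.sqrt M ≤ Real.sqrt 2 * Real.sqrt L := by
          rw [← Real.sqrt_mul (by norm_num : (0:ℝ) ≤ 2)]
          exact Real.sqrt_le_sqrt hM2L
        have h6 : Real.sqrt (Real.sqrt M) ≤ Real.sqrt (Real.sqrt 2) * Real.sqrt (Real.sqrt L) := by
          rw [← Real.sqrt_mul (Real.sqrt_nonneg 2)]
          apply Real.sqrt_le_sqrt
          rw [← Real.sqrt_mul (by norm_num : (0:ℝ) ≤ 2)]
          exact Real.sqrt_le_sqrt hM2L
        have hs2prod : Real.sqrt 2 * Real.sqrt (Real.sqrt 2) ≤ 2 := sqrt2_prod_le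
        have hL0' : (0:ℝ) < L := hL0
        have hsL0 : (0:ℝ) < Real.sqrt L := Real.sqrt_pos.2 hL0'
        have hssL0 : (0:ℝ) < Real.sqrt (Real.sqrt L) := Real.sqrt_pos.2 hsL0
        have h7 : Real.sqrt M * Real.sqrt (Real.sqrt M)
            ≤ 2 * (Real.sqrt L * Real.sqrt (Real.sqrt L)) := by
          calc Real.sqrt M * Real.sqrt (Real.sqrt M)
              ≤ (Real.sqrt 2 * Real.sqrt L) * (Real.sqrt (Real.sqrt 2) * Real.sqrt (Real.sqrt L)) := by
                apply mul_le_mul h5 h6 (Real.sqrt_nonneg _) (by positivity)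
            _ = (Real.sqrt 2 * Real.sqrt (Real.sqrt 2)) * (Real.sqrt L * Real.sqrt (Real.sqrt L)) := by ring
            _ ≤ 2 * (Real.sqrt L * Real.sqrt (Real.sqrt L)) := by
                apply mul_le_mul_of_nonneg_right hs2prod (by positivity)
        have h8 : L⁻¹ * (Real.sqrt L * Real.sqrt (Real.sqrt L)) = 1 / Real.sqrt (Real.sqrt L) := by
          have e1 : Real.sqrt L = Real.sqrt (Real.sqrt L) * Real.sqrt (Real.sqrt L) :=
            (Real.mul_self_sqrt (Real.sqrt_nonneg L)).symm
          have e2 : L = Real.sqrt L * Real.sqrt L := (Real.mul_self_sqrt hL0'.le).symm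
          field_simp
          nlinarith [e1, e2]
        have h9 : (1:ℝ) / Real.sqrt (Real.sqrt L) ≤ 1 / Real.sqrt (Real.sqrt t) := by
          apply div_le_div_of_nonneg_left one_pos.le hsst0
          exact Real.sqrt_le_sqrt (Real.sqrt_le_sqrt hL)
        calc L⁻¹ * (4 * (Real.sqrt M * Real.log (Real.log M)))
            ≤ L⁻¹ * (4 * (4 * (Real.sqrt M * Real.sqrt (Real.sqrt M)))) := by
              apply mul_le_mul_of_nonneg_left _ (inv_nonneg.2 hL0'.le)
              linarith
          _ ≤ L⁻¹ * (16 * (2 * (Real.sqrt L * Real.sqrt (Real.sqrt L)))) := by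
              apply mul_le_mul_of_nonneg_left _ (inv_nonneg.2 hL0'.le)
              linarith
          _ = 32 * (L⁻¹ * (Real.sqrt L * Real.sqrt (Real.sqrt L))) := by ring
          _ = 32 * (1 / Real.sqrt (Real.sqrt L)) := by rw [h8]
          _ ≤ 32 * (1 / Real.sqrt (Real.sqrt t)) := by linarith
          _ = 32 / Real.sqrt (Real.sqrt t) := by ring
      -- term 2 : L⁻¹ * (8 * (M / log M)) ≤ 36 / log t
      have ht2 : L⁻¹ * (8 * (M / Real.log M)) ≤ 36 / Real.log t := by
        have hMst : Real.sqrt t ≤ M := by nlinarith [Real.mul_self_sqrt ht0.le, hst, h4e, hLM, hL]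
        have hlogMst : Real.log t / 2 ≤ Real.log M := by
          rw [← hlst]; exact Real.log_le_log hst0 hMst
        have h1 : L⁻¹ * (8 * (M / Real.log M)) ≤ 16 / Real.log M := by
          rw [div_eq_mul_inv (16:ℝ)]
          have : L⁻¹ * (8 * (M / Real.log M)) = (8 * M / L) * (Real.log M)⁻¹ := by
            field_simp
          rw [this]
          apply mul_le_mul_of_nonneg_right _ (inv_nonneg.2 hlogM0.le)
          rw [div_le_iff₀ hL0]
          nlinarith
        have h2 : 16 / Real.log M ≤ 16 / (Real.log t / 2) := by
          apply div_le_div_of_nonneg_left (by norm_num) (by linarith) hlogMst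
        have h3 : 16 / (Real.log t / 2) = 32 / Real.log t := by field_simp; ring
        have h4 : (32:ℝ) / Real.log t ≤ 36 / Real.log t := by gcongr; norm_num
        linarith
      linarith
lemma tendsto_sqrt_atTop' : Tendsto (fun x : ℝ => Real.sqrt x) atTop atTop := by
  refine (tendsto_rpow_atTop (y := (1:ℝ)/2) (by norm_num)).congr' ?_
  filter_upwards [eventually_ge_atTop (0:ℝ)] with x hx
  rw [Real.sqrt_eq_rpow]

lemma interval_cases_compl {a b t : ℝ} (ht : 0 < t) (hab : a < b)
    (h : Ioo a b ⊆ (Icc (-t) t)ᶜ) : t ≤ a ∨ b ≤ -t := by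
  by_contra hcon
  push_neg at hcon
  obtain ⟨h1, h2⟩ := hcon
  set m := (max a (-t) + min b t) / 2 with hm
  have hlt : max a (-t) < min b t :=
    max_lt (lt_min hab h1) (lt_min h2 (by linarith))
  have hma : max a (-t) < m := by rw [hm]; linarith
  have hmb : m < min b t := by rw [hm]; linarith
  have hm1 : m ∈ Ioo a b :=
    ⟨lt_of_le_of_lt (le_max_left _ _) hma, lt_of_lt_of_le hmb (min_le_left _ _)⟩
  have hm2 : m ∈ Icc (-t) t :=
    ⟨le_of_lt (lt_of_le_of_lt (le_max_right _ _) hma),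
     le_of_lt (lt_of_lt_of_le hmb (min_le_right _ _))⟩
  exact h hm1 hm2

lemma osc_bound_50 {a b : ℝ} (hab : a < b) : intervalOsc loglogFn a b ≤ 50 := by
  have he2 : (2:ℝ) ≤ Real.exp 1 := by linarith [Real.add_one_le_exp 1]
  have helt : Real.exp 1 < 2.7182818286 := Real.exp_one_lt_d9
  have hee4 : Real.exp 1 * Real.exp 1 * (Real.exp 1 * Real.exp 1) = Real.exp 4 := by
    rw [show (4:ℝ) = 1 + 1 + 1 + 1 by norm_num, Real.exp_add, Real.exp_add, Real.exp_add]
    ring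
  by_cases h : b - a ≤ Real.exp 4
  · refine (osc_short hab).trans ?_
    rw [div_le_iff₀ (Real.exp_pos 1)]
    have hge : (2.7182818283:ℝ) < Real.exp 1 := Real.exp_one_gt_d9
    have hsq : Real.exp 1 * Real.exp 1 < 7.39 := by nlinarith
    have h4 : Real.exp 4 < 55 := by nlinarith
    nlinarith
  · push_neg at h
    refine (osc_long le_rfl hab h.le).trans ?_
    have hsq4 : Real.sqrt (Real.exp 4) = Real.exp 1 * Real.exp 1 := by
      rw [← hee4]; exact Real.sqrt_mul_self (by positivity)
    have hssq4 : Real.sqrt (Real.sqrt (Real.exp 4)) = Real.exp 1 := by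
      rw [hsq4]; exact Real.sqrt_mul_self (Real.exp_pos 1).le
    rw [hssq4, Real.log_exp]
    have h1 : 32 / Real.exp 1 ≤ 16 := by
      rw [div_le_iff₀ (Real.exp_pos 1)]; nlinarith
    have h2 : (36:ℝ)/4 = 9 := by norm_num
    linarith

/-- `log log |x|` (cut off near the origin) satisfies the three vanishing
mean oscillation conditions `γ̃₁ = γ̃₂ = γ̃₃ = 0`, and has finite BMO norm;
consequently it belongs to `CMO(ℝ)`. -/
theorem loglog_mem_CMO :
    (⨆ (a : ℝ) (b : ℝ) (_ : a < b), ENNReal.ofReal (intervalOsc loglogFn a b)) < ⊤ ∧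
    Tendsto (fun t : ℝ => ⨆ (a : ℝ) (b : ℝ) (_ : a < b) (_ : b - a ≤ t),
        ENNReal.ofReal (intervalOsc loglogFn a b))
      (nhdsWithin 0 (Set.Ioi 0)) (nhds 0) ∧
    Tendsto (fun t : ℝ => ⨆ (a : ℝ) (b : ℝ) (_ : a < b) (_ : t ≤ b - a),
        ENNReal.ofReal (intervalOsc loglogFn a b))
      atTop (nhds 0) ∧
    Tendsto (fun t : ℝ => ⨆ (a : ℝ) (b : ℝ) (_ : a < b)
        (_ : Set.Ioo a b ⊆ (Set.Icc (-t) t)ᶜ),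
        ENNReal.ofReal (intervalOsc loglogFn a b))
      atTop (nhds 0) := by
  refine ⟨?_, ?_, ?_, ?_⟩
  · -- finite BMO norm
    refine lt_of_le_of_lt (iSup_le fun a => iSup_le fun b => iSup_le fun hab =>
      ENNReal.ofReal_le_ofReal (osc_bound_50 hab)) ofReal_lt_top
  · -- γ̃₁
    have upper : ∀ᶠ t : ℝ in nhdsWithin 0 (Set.Ioi 0),
        (⨆ (a : ℝ) (b : ℝ) (_ : a < b) (_ : b - a ≤ t),
          ENNReal.ofReal (intervalOsc loglogFn a b)) ≤ ENNReal.ofReal (2 * t / Real.exp 1) := by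
      filter_upwards [self_mem_nhdsWithin] with t _
      refine iSup_le fun a => iSup_le fun b => iSup_le fun hab => iSup_le fun hba => ?_
      refine ENNReal.ofReal_le_ofReal ((osc_short hab).trans ?_)
      gcongr
    have hcont : Tendsto (fun t : ℝ => 2 * t / Real.exp 1) (nhdsWithin 0 (Set.Ioi 0)) (nhds 0) := by
      apply tendsto_nhdsWithin_of_tendsto_nhds
      have : Continuous fun t : ℝ => 2 * t / Real.exp 1 := by continuity
      simpa using this.tendsto 0
    have h0 : Tendsto (fun t : ℝ => ENNReal.ofReal (2 * t / Real.exp 1))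
        (nhdsWithin 0 (Set.Ioi 0)) (nhds 0) := by
      simpa using ENNReal.tendsto_ofReal hcont
    exact tendsto_of_tendsto_of_tendsto_of_le_of_le' tendsto_const_nhds h0
      (Eventually.of_forall fun t => zero_le) upper
  · -- γ̃₂
    have upper : ∀ᶠ t : ℝ in atTop,
        (⨆ (a : ℝ) (b : ℝ) (_ : a < b) (_ : t ≤ b - a),
          ENNReal.ofReal (intervalOsc loglogFn a b))
          ≤ ENNReal.ofReal (32 / Real.sqrt (Real.sqrt t) + 36 / Real.log t) := by
      filter_upwards [eventually_ge_atTop (Real.exp 4)] with t ht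
      refine iSup_le fun a => iSup_le fun b => iSup_le fun hab => iSup_le fun hba => ?_
      exact ENNReal.ofReal_le_ofReal (osc_long ht hab hba)
    have h1 : Tendsto (fun t : ℝ => 32 / Real.sqrt (Real.sqrt t) + 36 / Real.log t)
        atTop (nhds 0) := by
      have hs : Tendsto (fun t : ℝ => Real.sqrt (Real.sqrt t)) atTop atTop :=
        tendsto_sqrt_atTop'.comp tendsto_sqrt_atTop'
      have h2 : Tendsto (fun t : ℝ => 32 / Real.sqrt (Real.sqrt t)) atTop (nhds 0) := by
        simpa [div_eq_mul_inv] using hs.inv_tendsto_atTop.const_mul (32:ℝ)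
      have h3 : Tendsto (fun t : ℝ => 36 / Real.log t) atTop (nhds 0) := by
        simpa [div_eq_mul_inv] using Real.tendsto_log_atTop.inv_tendsto_atTop.const_mul (36:ℝ)
      simpa using h2.add h3
    have h0 : Tendsto (fun t : ℝ => ENNReal.ofReal (32 / Real.sqrt (Real.sqrt t) + 36 / Real.log t))
        atTop (nhds 0) := by
      simpa using ENNReal.tendsto_ofReal h1
    exact tendsto_of_tendsto_of_tendsto_of_le_of_le' tendsto_const_nhds h0
      (Eventually.of_forall fun t => zero_le) upper
  · -- γ̃₃
    have upper : ∀ᶠ t : ℝ in atTop,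
        (⨆ (a : ℝ) (b : ℝ) (_ : a < b) (_ : Set.Ioo a b ⊆ (Set.Icc (-t) t)ᶜ),
          ENNReal.ofReal (intervalOsc loglogFn a b)) ≤ ENNReal.ofReal (2 / Real.log t) := by
      filter_upwards [eventually_ge_atTop (Real.exp 1)] with t ht
      have ht0 : (0:ℝ) < t := (Real.exp_pos 1).trans_le ht
      have hlt1 : (1:ℝ) ≤ Real.log t := (Real.le_log_iff_exp_le ht0).2 ht
      refine iSup_le fun a => iSup_le fun b => iSup_le fun hab => iSup_le fun hsub => ?_
      refine ENNReal.ofReal_le_ofReal ?_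
      rcases interval_cases_compl ht0 hab hsub with h | h
      · refine (osc_right (ht.trans h) hab).trans ?_
        apply div_le_div_of_nonneg_left (by norm_num) (by linarith)
        exact Real.log_le_log ht0 h
      · rw [intervalOsc_reflect hab]
        have hb : Real.exp 1 ≤ -b := by linarith
        refine (osc_right hb (by linarith : -b < -a)).trans ?_
        apply div_le_div_of_nonneg_left (by norm_num) (by linarith)
        exact Real.log_le_log ht0 (by linarith)
    have h1 : Tendsto (fun t : ℝ => 2 / Real.log t) atTop (nhds 0) := by
      simpa [div_eq_mul_inv] using Real.tendsto_log_atTop.inv_tendsto_atTop.const_mul (2:ℝ)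
    have h0 : Tendsto (fun t : ℝ => ENNReal.ofReal (2 / Real.log t)) atTop (nhds 0) := by
      simpa using ENNReal.tendsto_ofReal h1
    exact tendsto_of_tendsto_of_tendsto_of_le_of_le' tendsto_const_nhds h0
      (Eventually.of_forall fun t => zero_le) upper
end
end

section
/- Let M ≥ e and let c, R > 0 satisfy c > 2R and c − R > M. Then (1/(2R))·∫_{c−R}^{c+R} |log(log x) − log(log c)| dx ≤ log(1 + log 2 / log M). -/
/-!
For `x ∈ [c - R, c + R]` the hypothesis `c > 2R` gives `x ≤ 2c` and `c ≤ 2x`, so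
`log x ≤ log 2 + log c ≤ (1 + log 2 / log M) log c` because `log c ≥ log M`, and symmetrically.
Hence `|log log x - log log c| ≤ log (1 + log 2 / log M)` pointwise, and the average obeys the
same bound.
-/

open Real

theorem log_log_le_log_log_add {M x y k : ℝ} (hM : 1 < M) (hx : M ≤ x) (hy : M ≤ y)
    (hk : 1 ≤ k) (hxy : x ≤ k * y) :
    log (log x) ≤ log (log y) + log (1 + log k / log M) := by
  have hlogM : 0 < log M := log_pos hM
  have hlogy : log M ≤ log y := log_le_log (by linarith) hy
  have hlogx : 0 < log x := log_pos (by linarith)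
  have hlog_x_le : log x ≤ (1 + log k / log M) * log y :=
    calc log x ≤ log (k * y) := log_le_log (by linarith) hxy
      _ = log k + log y := log_mul (by linarith : 0 < k).ne' (by linarith : 0 < y).ne'
      _ ≤ log k / log M * log y + log y := by
        gcongr
        rw [div_mul_eq_mul_div, le_div_iff₀ hlogM]
        exact mul_le_mul_of_nonneg_left hlogy (log_nonneg hk)
      _ = (1 + log k / log M) * log y := by ring
  calc log (log x) ≤ log ((1 + log k / log M) * log y) := log_le_log hlogx hlog_x_le
    _ = log (log y) + log (1 + log k / log M) := by
      have : 0 ≤ log k / log M := div_nonneg (log_nonneg hk) hlogM.le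
      rw [log_mul (by positivity) (by linarith), add_comm]

theorem abs_log_log_sub_le {M x y k : ℝ} (hM : 1 < M) (hx : M ≤ x) (hy : M ≤ y)
    (hk : 1 ≤ k) (hxy : x ≤ k * y) (hyx : y ≤ k * x) :
    |log (log x) - log (log y)| ≤ log (1 + log k / log M) :=
  abs_sub_le_iff.2
    ⟨by linarith [log_log_le_log_log_add hM hx hy hk hxy],
     by linarith [log_log_le_log_log_add hM hy hx hk hyx]⟩

/-- the mean deviation of `log log x` from `log log c` on the interval
`[c − R, c + R]` is at most `log(1 + log 2 / log M)` when `c > 2R` and `c − R > M ≥ e`. -/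
theorem loglog_average_deviation (M c R : ℝ)
    (hM : Real.exp 1 ≤ M) (hR : 0 < R) (hc : 2 * R < c) (hcM : M < c - R) :
    (1 / (2 * R)) * ∫ x in (c - R)..(c + R), |Real.log (Real.log x) - Real.log (Real.log c)| ≤
      Real.log (1 + Real.log 2 / Real.log M) := by
  have hM1 : 1 < M := (one_lt_exp_iff.2 one_pos).trans_le hM
  have hpointwise : ∀ x ∈ Set.uIoc (c - R) (c + R),
      ‖|log (log x) - log (log c)|‖ ≤ log (1 + log 2 / log M) := by
    intro x hx
    rw [Set.uIoc_of_le (by linarith)] at hx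
    rw [Real.norm_eq_abs, abs_abs]
    exact abs_log_log_sub_le hM1 (by linarith [hx.1]) (by linarith) one_le_two
      (by linarith [hx.2]) (by linarith [hx.1])
  calc (1 / (2 * R)) * ∫ x in (c - R)..(c + R), |log (log x) - log (log c)|
      ≤ (1 / (2 * R)) * (log (1 + log 2 / log M) * |c + R - (c - R)|) := by
        gcongr
        exact (Real.le_norm_self _).trans
          (intervalIntegral.norm_integral_le_of_norm_le_const hpointwise)
    _ = log (1 + log 2 / log M) := by
      rw [show c + R - (c - R) = 2 * R by ring, abs_of_pos (by positivity)]
      field_simp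
end

section
/- Let n ≥ 1 be an integer, let 0 < δ < 1 and c > 0. Then there exists a constant C > 0, depending only on n, δ and c, such that for all t, ρ₀, r > 0 with t ≤ ρ₀: ∫_0^∞ (t/√s) · (√s/(√s + ρ₀))^δ · s^{−n/2} · exp( −t²/(4s) − r²/(c·s) ) · ds/s ≤ C · (t/ρ₀)^δ · t^{1−δ} / (t² + r²)^{(n+1−δ)/2}. -/
open MeasureTheory Real

lemma aux_integrable_and_eq {α a : ℝ} (hα : 0 < α) (ha : 0 < a) :
    IntegrableOn (fun s : ℝ => s ^ (-α - 1) * Real.exp (-(a / s))) (Set.Ioi 0) ∧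
    ∫ s in Set.Ioi 0, s ^ (-α - 1) * Real.exp (-(a / s)) = (1 / a) ^ α * Real.Gamma α := by
  have hg : IntegrableOn (fun y : ℝ => y ^ (α - 1) * Real.exp (-(a * y))) (Set.Ioi 0) := by
    have h0 : IntegrableOn (fun x : ℝ => Real.exp (-x) * x ^ (α - 1)) (Set.Ioi 0) :=
      Real.GammaIntegral_convergent hα
    have h1 : IntegrableOn (fun y : ℝ => Real.exp (-(a * y)) * (a * y) ^ (α - 1))
        (Set.Ioi 0) := by
      have := (integrableOn_Ioi_comp_mul_left_iff
        (fun x : ℝ => Real.exp (-x) * x ^ (α - 1)) 0 ha).mpr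
      simpa using this (by simpa using h0)
    have h2 : IntegrableOn
        (fun y : ℝ => a ^ (1 - α) * (Real.exp (-(a * y)) * (a * y) ^ (α - 1)))
        (Set.Ioi 0) := h1.const_mul (a ^ (1 - α))
    refine IntegrableOn.congr_fun h2 ?_ measurableSet_Ioi
    intro y hy
    have hy0 : (0:ℝ) < y := hy
    show a ^ (1 - α) * (Real.exp (-(a * y)) * (a * y) ^ (α - 1))
        = y ^ (α - 1) * Real.exp (-(a * y))
    rw [Real.mul_rpow ha.le hy0.le]
    rw [show a ^ (1 - α) * (Real.exp (-(a * y)) * (a ^ (α - 1) * y ^ (α - 1)))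
        = (a ^ (1 - α) * a ^ (α - 1)) * (y ^ (α - 1) * Real.exp (-(a * y))) by ring,
      ← Real.rpow_add ha]
    norm_num
  have key : ∀ x ∈ Set.Ioi (0:ℝ),
      (|(-1:ℝ)| * x ^ ((-1:ℝ) - 1)) •
        ((fun y : ℝ => y ^ (α - 1) * Real.exp (-(a * y))) (x ^ (-1:ℝ)))
      = x ^ (-α - 1) * Real.exp (-(a / x)) := by
    intro x hx
    have hx0 : (0:ℝ) < x := hx
    simp only [abs_neg, abs_one, one_mul, smul_eq_mul]
    rw [← Real.rpow_mul hx0.le, Real.rpow_neg_one, ← div_eq_mul_inv,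
      ← mul_assoc, ← Real.rpow_add hx0,
      show (-1:ℝ) - 1 + -1 * (α - 1) = -α - 1 by ring]
  constructor
  · have := (integrableOn_Ioi_comp_rpow_iff
      (fun y : ℝ => y ^ (α - 1) * Real.exp (-(a * y))) (p := -1) (by norm_num)).mpr hg
    exact this.congr_fun key measurableSet_Ioi
  · calc ∫ s in Set.Ioi 0, s ^ (-α - 1) * Real.exp (-(a / s))
        = ∫ x in Set.Ioi 0, (|(-1:ℝ)| * x ^ ((-1:ℝ) - 1)) •
            ((fun y : ℝ => y ^ (α - 1) * Real.exp (-(a * y))) (x ^ (-1:ℝ))) :=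
          (setIntegral_congr_fun measurableSet_Ioi key).symm
      _ = ∫ y in Set.Ioi 0, y ^ (α - 1) * Real.exp (-(a * y)) :=
          integral_comp_rpow_Ioi (fun y : ℝ => y ^ (α - 1) * Real.exp (-(a * y))) (p := -1) (by norm_num)
      _ = (1 / a) ^ α * Real.Gamma α := integral_rpow_mul_exp_neg_mul_Ioi hα ha

/-- the subordination-formula integral estimate comparing the Poisson
kernels of the free Laplacian and of a Schrödinger operator. -/
theorem subordination_integral_estimate (n : ℕ) (hn : 1 ≤ n) (δ c : ℝ)
    (hδ0 : 0 < δ) (hδ1 : δ < 1) (hc : 0 < c) :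
    ∃ C : ℝ, 0 < C ∧ ∀ t ρ₀ r : ℝ, 0 < t → 0 < ρ₀ → 0 < r → t ≤ ρ₀ →
      (∫ s in Set.Ioi (0 : ℝ),
          (t / Real.sqrt s) * (Real.sqrt s / (Real.sqrt s + ρ₀)) ^ δ *
            s ^ (-(n : ℝ) / 2) * Real.exp (-(t ^ 2 / (4 * s)) - r ^ 2 / (c * s)) / s) ≤
        C * (t / ρ₀) ^ δ * t ^ (1 - δ) / (t ^ 2 + r ^ 2) ^ (((n : ℝ) + 1 - δ) / 2) := by
  set α : ℝ := ((n : ℝ) + 1 - δ) / 2 with hαdef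
  have hn0 : (0:ℝ) ≤ (n : ℝ) := Nat.cast_nonneg n
  have hα : 0 < α := by
    have : 0 < (n : ℝ) + 1 - δ := by linarith
    positivity
  set m : ℝ := min (4:ℝ)⁻¹ c⁻¹ with hmdef
  have hm : 0 < m := lt_min (by norm_num) (inv_pos.mpr hc)
  refine ⟨Real.Gamma α * (1 / m) ^ α, by positivity, ?_⟩
  intro t ρ₀ r ht hρ hr htρ
  set a : ℝ := t ^ 2 / 4 + r ^ 2 / c with hadef
  have ha : 0 < a := by positivity
  obtain ⟨hint, hval⟩ := aux_integrable_and_eq hα ha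
  -- pointwise bound
  have hbound : ∀ s ∈ Set.Ioi (0:ℝ),
      (t / Real.sqrt s) * (Real.sqrt s / (Real.sqrt s + ρ₀)) ^ δ *
        s ^ (-(n : ℝ) / 2) * Real.exp (-(t ^ 2 / (4 * s)) - r ^ 2 / (c * s)) / s
      ≤ (t * ρ₀ ^ (-δ)) * (s ^ (-α - 1) * Real.exp (-(a / s))) := by
    intro s hs
    have hs0 : (0:ℝ) < s := hs
    have hsq : (0:ℝ) < Real.sqrt s := Real.sqrt_pos.mpr hs0
    have hexp : Real.exp (-(t ^ 2 / (4 * s)) - r ^ 2 / (c * s)) = Real.exp (-(a / s)) := by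
      congr 1
      rw [hadef]
      field_simp
      ring
    have hX : (Real.sqrt s / (Real.sqrt s + ρ₀)) ^ δ ≤ s ^ (δ / 2) * ρ₀ ^ (-δ) := by
      have h1 : Real.sqrt s / (Real.sqrt s + ρ₀) ≤ Real.sqrt s / ρ₀ :=
        div_le_div_of_nonneg_left hsq.le hρ (by linarith)
      have h2 : (Real.sqrt s / (Real.sqrt s + ρ₀)) ^ δ ≤ (Real.sqrt s / ρ₀) ^ δ :=
        Real.rpow_le_rpow (by positivity) h1 hδ0.le
      refine h2.trans_eq ?_
      rw [Real.div_rpow hsq.le hρ.le, Real.sqrt_eq_rpow, ← Real.rpow_mul hs0.le,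
        Real.rpow_neg hρ.le, div_eq_mul_inv,
        show (1 / 2 : ℝ) * δ = δ / 2 by ring]
    calc (t / Real.sqrt s) * (Real.sqrt s / (Real.sqrt s + ρ₀)) ^ δ *
          s ^ (-(n : ℝ) / 2) * Real.exp (-(t ^ 2 / (4 * s)) - r ^ 2 / (c * s)) / s
        ≤ (t / Real.sqrt s) * (s ^ (δ / 2) * ρ₀ ^ (-δ)) *
            s ^ (-(n : ℝ) / 2) * Real.exp (-(t ^ 2 / (4 * s)) - r ^ 2 / (c * s)) / s := by
          gcongr
      _ = (t * ρ₀ ^ (-δ)) * (s ^ (-α - 1) * Real.exp (-(a / s))) := by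
          rw [hexp, Real.sqrt_eq_rpow,
            show s ^ (-α - 1) = s ^ (-(1/2 : ℝ)) * s ^ (δ / 2) * s ^ (-(n : ℝ) / 2)
                * s ^ (-1 : ℝ) by
              rw [← Real.rpow_add hs0, ← Real.rpow_add hs0, ← Real.rpow_add hs0, hαdef]
              ring_nf,
            Real.rpow_neg hs0.le (1/2), Real.rpow_neg_one]
          field_simp
  have hf_nonneg : 0 ≤ᵐ[volume.restrict (Set.Ioi (0:ℝ))]
      fun s => (t / Real.sqrt s) * (Real.sqrt s / (Real.sqrt s + ρ₀)) ^ δ *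
        s ^ (-(n : ℝ) / 2) * Real.exp (-(t ^ 2 / (4 * s)) - r ^ 2 / (c * s)) / s := by
    filter_upwards [ae_restrict_mem measurableSet_Ioi] with s hs
    have hs0 : (0:ℝ) < s := hs
    have hsq : (0:ℝ) < Real.sqrt s := Real.sqrt_pos.mpr hs0
    positivity
  have hg_int : Integrable (fun s : ℝ => (t * ρ₀ ^ (-δ)) * (s ^ (-α - 1) *
      Real.exp (-(a / s)))) (volume.restrict (Set.Ioi (0:ℝ))) :=
    hint.const_mul _
  have hle : (∫ s in Set.Ioi (0 : ℝ),
      (t / Real.sqrt s) * (Real.sqrt s / (Real.sqrt s + ρ₀)) ^ δ *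
        s ^ (-(n : ℝ) / 2) * Real.exp (-(t ^ 2 / (4 * s)) - r ^ 2 / (c * s)) / s)
      ≤ ∫ s in Set.Ioi (0:ℝ), (t * ρ₀ ^ (-δ)) * (s ^ (-α - 1) * Real.exp (-(a / s))) := by
    refine integral_mono_of_nonneg hf_nonneg hg_int ?_
    filter_upwards [ae_restrict_mem measurableSet_Ioi] with s hs
    exact hbound s hs
  have hval2 : (∫ s in Set.Ioi (0:ℝ), (t * ρ₀ ^ (-δ)) * (s ^ (-α - 1) *
      Real.exp (-(a / s)))) = (t * ρ₀ ^ (-δ)) * ((1 / a) ^ α * Real.Gamma α) := by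
    rw [MeasureTheory.integral_const_mul, hval]
  refine hle.trans ?_
  rw [hval2]
  -- final comparison
  have hma : m * (t ^ 2 + r ^ 2) ≤ a := by
    have h1 : m ≤ (4:ℝ)⁻¹ := min_le_left _ _
    have h2 : m ≤ c⁻¹ := min_le_right _ _
    have ht2 : (0:ℝ) ≤ t ^ 2 := sq_nonneg t
    have hr2 : (0:ℝ) ≤ r ^ 2 := sq_nonneg r
    have e1 : m * t ^ 2 ≤ t ^ 2 / 4 := by
      rw [div_eq_mul_inv, mul_comm (t^2)]
      exact mul_le_mul_of_nonneg_right h1 ht2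
    have e2 : m * r ^ 2 ≤ r ^ 2 / c := by
      rw [div_eq_mul_inv, mul_comm (r^2)]
      exact mul_le_mul_of_nonneg_right h2 hr2
    rw [hadef]; linarith [e1, e2]
  have htr : (0:ℝ) < t ^ 2 + r ^ 2 := by positivity
  have hpow : (1 / a) ^ α ≤ (1 / m) ^ α * (t ^ 2 + r ^ 2) ^ (-α) := by
    have h1 : (1 / a) ≤ 1 / (m * (t ^ 2 + r ^ 2)) := by
      apply one_div_le_one_div_of_le (by positivity) hma
    calc (1 / a) ^ α ≤ (1 / (m * (t ^ 2 + r ^ 2))) ^ α :=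
          Real.rpow_le_rpow (by positivity) h1 hα.le
      _ = (1 / m) ^ α * (t ^ 2 + r ^ 2) ^ (-α) := by
          rw [one_div, mul_inv, Real.mul_rpow (by positivity) (by positivity),
            Real.inv_rpow htr.le, ← Real.rpow_neg htr.le, one_div]
  have h1 : (t / ρ₀) ^ δ * t ^ (1 - δ) = t * ρ₀ ^ (-δ) := by
    rw [Real.div_rpow ht.le hρ.le, Real.rpow_neg hρ.le, div_mul_eq_mul_div,
      div_eq_mul_inv, ← Real.rpow_add ht, show δ + (1 - δ) = 1 by ring, Real.rpow_one]
  have hRHS : Real.Gamma α * (1 / m) ^ α * (t / ρ₀) ^ δ * t ^ (1 - δ) /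
      (t ^ 2 + r ^ 2) ^ α
      = (t * ρ₀ ^ (-δ)) * (Real.Gamma α * ((1 / m) ^ α * (t ^ 2 + r ^ 2) ^ (-α))) := by
    rw [show Real.Gamma α * (1 / m) ^ α * (t / ρ₀) ^ δ * t ^ (1 - δ) / (t ^ 2 + r ^ 2) ^ α
        = Real.Gamma α * (1 / m) ^ α * ((t / ρ₀) ^ δ * t ^ (1 - δ)) / (t ^ 2 + r ^ 2) ^ α
        by ring, h1, Real.rpow_neg htr.le]
    ring
  rw [hRHS]
  have hΓ : 0 < Real.Gamma α := Real.Gamma_pos_of_pos hα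
  have := mul_le_mul_of_nonneg_left (mul_le_mul_of_nonneg_left hpow hΓ.le)
    (by positivity : (0:ℝ) ≤ t * ρ₀ ^ (-δ))
  calc (t * ρ₀ ^ (-δ)) * ((1 / a) ^ α * Real.Gamma α)
      = (t * ρ₀ ^ (-δ)) * (Real.Gamma α * (1 / a) ^ α) := by ring
    _ ≤ (t * ρ₀ ^ (-δ)) * (Real.Gamma α * ((1 / m) ^ α * (t ^ 2 + r ^ 2) ^ (-α))) := this
end
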